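/- arXiv:1311.2881 — 10 statements merged into one kernel-verified Lean document; each statement's English description precedes it below -/
import Mathlib

section
/- Every finite-dimensional simple K G-module has dimension at most 2. -/
/-!
Conjugation by `g` squares `ε`, and `ε ^ 4 = ε`, so `g ^ 2` commutes with `ε`; hence `g ^ 2` and `z`
are central and, by Schur's lemma, act on a simple module by scalars. For an eigenvector `v` of `ε`
the span of `v` and `g • v` is then stable under `g`, under `z`, and under `ε` because
`ε g = g ε ^ 2`; so it is a nonzero submodule, hence all of the module.
-/

open MonoidAlgebra

section

variable {G : Type*} [Group G] {g ε : G}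

theorem conj_sq_of_conj_eq_sq (h : g * ε * g⁻¹ = ε ^ 2) (h3 : ε ^ 3 = 1) :
    g * ε ^ 2 * g⁻¹ = ε := by
  have hc : MulAut.conj g ε = ε ^ 2 := h
  calc g * ε ^ 2 * g⁻¹ = MulAut.conj g (ε ^ 2) := rfl
    _ = ε ^ 3 * ε := by rw [map_pow, hc, ← pow_mul, ← pow_succ]
    _ = ε := by rw [h3, one_mul]

theorem commute_sq_of_conj_eq_sq (h : g * ε * g⁻¹ = ε ^ 2) (h3 : ε ^ 3 = 1) :
    Commute (g ^ 2) ε := by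
  rw [commute_iff_eq, ← mul_inv_eq_iff_eq_mul]
  calc g ^ 2 * ε * (g ^ 2)⁻¹ = g * (g * ε * g⁻¹) * g⁻¹ := by rw [sq]; group
    _ = ε := by rw [h, conj_sq_of_conj_eq_sq h h3]

theorem mul_eq_mul_sq_of_conj_eq_sq (h : g * ε * g⁻¹ = ε ^ 2) (h3 : ε ^ 3 = 1) :
    ε * g = g * ε ^ 2 :=
  (mul_inv_eq_iff_eq_mul.1 (conj_sq_of_conj_eq_sq h h3)).symm

end

namespace Subgroup

variable {G : Type*} [Group G]

theorem mem_center_of_forall_commute {S : Set G} (hS : closure S = ⊤) {u : G}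
    (hu : ∀ s ∈ S, Commute u s) : u ∈ center G := by
  rw [← centralizer_univ, ← coe_top, ← hS, centralizer_closure]
  exact fun s hs ↦ (hu s hs).symm

end Subgroup

theorem IsSimpleModule.exists_smul_eq_smul_of_mem_center (K : Type*) {A V : Type*} [Field K]
    [IsAlgClosed K] [Ring A] [Algebra K A] [AddCommGroup V] [Module K V] [Module A V]
    [IsScalarTower K A V] [FiniteDimensional K V] [IsSimpleModule A V] {r : A}
    (hr : r ∈ Set.center A) : ∃ c : K, ∀ x : V, r • x = c • x := by
  let φ : Module.End A V :=
    { toFun x := r • x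
      map_add' := smul_add r
      map_smul' s x := by
        rw [smul_smul, ← (Semigroup.mem_center_iff.1 hr s), mul_smul]
        rfl }
  obtain ⟨c, hc⟩ := (IsSimpleModule.algebraMap_end_bijective_of_isAlgClosed K (A := A) (V := V)).2 φ
  exact ⟨c, fun x ↦ (LinearMap.congr_fun hc x).symm⟩

theorem MonoidAlgebra.of_inv_smul_of_smul {K G V : Type*} [Semiring K] [Group G] [AddCommMonoid V]
    [Module (MonoidAlgebra K G) V] (a : G) (x : V) :
    of K G a⁻¹ • of K G a • x = x := by
  rw [← mul_smul, ← map_mul, inv_mul_cancel, map_one, one_smul]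

section

variable {K G V : Type*} [Field K] [Group G] [AddCommGroup V] [Module K V]
  [Module (MonoidAlgebra K G) V] [IsScalarTower K (MonoidAlgebra K G) V]

theorem IsSimpleModule.exists_of_smul_eq_smul_of_mem_center [IsAlgClosed K] [FiniteDimensional K V]
    [IsSimpleModule (MonoidAlgebra K G) V] {u : G} (hu : u ∈ Subgroup.center G) :
    ∃ c : K, ∀ x : V, of K G u • x = c • x :=
  exists_smul_eq_smul_of_mem_center K <| Semigroup.mem_center_iff.2 fun r ↦
    (of_commute (fun a ↦ (Subgroup.mem_center_iff.1 hu a).symm) r).eq.symm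

namespace Submodule

variable (G) in
def groupStabilizer (W : Submodule K V) [FiniteDimensional K W] : Subgroup G where
  carrier := {a | ∀ w ∈ W, of K G a • w ∈ W}
  one_mem' w hw := by rwa [map_one, one_smul]
  mul_mem' {a b} ha hb w hw := by
    rw [map_mul, mul_smul]
    exact ha _ (hb w hw)
  inv_mem' {a} ha w hw := by
    -- `a` restricts to an injective, hence surjective, endomorphism of the finite-dimensional `W`
    let f := (DistribSMul.toLinearMap K V (of K G a)).restrict ha
    have hf : Function.Injective f := fun x y hxy ↦ by
      have h : of K G a • (x : V) = of K G a • (y : V) :=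
        congrArg Subtype.val hxy
      exact Subtype.ext (by
        rw [← of_inv_smul_of_smul (K := K) a (x : V), h,
          of_inv_smul_of_smul])
    obtain ⟨w', hw'⟩ := LinearMap.injective_iff_surjective.1 hf ⟨w, hw⟩
    have : of K G a • (w' : V) = w := congrArg Subtype.val hw'
    rw [← this, of_inv_smul_of_smul]
    exact w'.2

theorem mem_groupStabilizer_span_iff {s : Set V} [FiniteDimensional K (span K s)] {a : G} :
    a ∈ (span K s).groupStabilizer G ↔ ∀ x ∈ s, of K G a • x ∈ span K s :=
  ⟨fun h x hx ↦ h x (subset_span hx), fun h ↦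
    span_le (p := (span K s).comap (DistribSMul.toLinearMap K V (of K G a))).2 h⟩

theorem eq_top_of_forall_smul_mem [IsSimpleModule (MonoidAlgebra K G) V] {W : Submodule K V}
    (hW : W ≠ ⊥) (h : ∀ a : G, ∀ w ∈ W, of K G a • w ∈ W) : W = ⊤ := by
  let W' : Submodule (MonoidAlgebra K G) V :=
    { W with
      smul_mem' r w hw := by
        induction r using MonoidAlgebra.induction_on with
        | of a => exact h a w hw
        | add r s hr hs => rw [add_smul]; exact W.add_mem hr hs
        | smul c r hr => rw [smul_assoc]; exact W.smul_mem c hr }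
  have hres : W'.restrictScalars K = W := rfl
  rcases eq_bot_or_eq_top W' with hbot | htop
  · exact absurd (by rw [← hres, hbot, restrictScalars_bot]) hW
  · rw [← hres, htop, restrictScalars_top]

end Submodule

open Submodule in
theorem IsSimpleModule.finrank_le_card_of_smul_mem_span [IsSimpleModule (MonoidAlgebra K G) V]
    [FiniteDimensional K V] {S : Set G} (hS : Subgroup.closure S = ⊤) {s : Finset V}
    (hs : ∃ x ∈ s, x ≠ 0) (h : ∀ a ∈ S, ∀ x ∈ s, of K G a • x ∈ span K (s : Set V)) :
    Module.finrank K V ≤ s.card := by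
  have hstab : (span K (s : Set V)).groupStabilizer G = ⊤ := by
    rw [eq_top_iff, ← hS, Subgroup.closure_le]
    exact fun a ha ↦ mem_groupStabilizer_span_iff.2 (h a ha)
  obtain ⟨x, hxs, hx⟩ := hs
  have htop : span K (s : Set V) = ⊤ :=
    eq_top_of_forall_smul_mem ((Submodule.ne_bot_iff _).2 ⟨x, subset_span hxs, hx⟩)
      fun a ↦ hstab.ge (Subgroup.mem_top a)
  calc Module.finrank K V = Module.finrank K (span K (s : Set V)) := by rw [htop, finrank_top]
    _ ≤ s.card := finrank_span_finset_le_card s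

end

theorem dim_le_two_of_simple_general
    {K : Type*} [Field K] [IsAlgClosed K] {G : Type*} [Group G]
    (g ε z : G)
    (hgen : Subgroup.closure {g, ε, z} = ⊤)
    (hrel1 : g * ε * g⁻¹ = ε ^ 2) (hrel2 : ε ^ 3 = 1)
    (hrel3 : z * g = g * z) (hrel4 : z * ε = ε * z)
    (V : Type*) [AddCommGroup V] [Module K V]
    [Module (MonoidAlgebra K G) V] [IsScalarTower K (MonoidAlgebra K G) V]
    [FiniteDimensional K V] [IsSimpleModule (MonoidAlgebra K G) V] :
    Module.finrank K V ≤ 2 := by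
  have hcenter {u : G} (hu : Commute u g ∧ Commute u ε ∧ Commute u z) : u ∈ Subgroup.center G :=
    Subgroup.mem_center_of_forall_commute hgen <| by simpa only [Set.mem_insert_iff,
      Set.mem_singleton_iff, forall_eq_or_imp, forall_eq] using hu
  obtain ⟨c, hc⟩ := IsSimpleModule.exists_of_smul_eq_smul_of_mem_center (K := K) (V := V)
    (hcenter ⟨(Commute.refl g).pow_left 2, commute_sq_of_conj_eq_sq hrel1 hrel2,
      (show Commute z g from hrel3).symm.pow_left 2⟩)
  obtain ⟨d, hd⟩ := IsSimpleModule.exists_of_smul_eq_smul_of_mem_center (K := K) (V := V)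
    (hcenter ⟨hrel3, hrel4, Commute.refl z⟩)
  have : Nontrivial V := IsSimpleModule.nontrivial (MonoidAlgebra K G) V
  obtain ⟨μ, hμ⟩ := Module.End.exists_eigenvalue (DistribSMul.toLinearMap K V (of K G ε))
  obtain ⟨v, hv⟩ := hμ.exists_hasEigenvector
  have hεv : of K G ε • v = μ • v := hv.apply_eq_smul
  have hεgv : of K G ε • of K G g • v = (μ * μ) • of K G g • v := by
    rw [← mul_smul, ← map_mul, mul_eq_mul_sq_of_conj_eq_sq hrel1 hrel2, sq, map_mul, map_mul,
      mul_smul, mul_smul, hεv, smul_comm (of K G ε) μ v, hεv, smul_smul, smul_comm]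
  classical
  refine (IsSimpleModule.finrank_le_card_of_smul_mem_span hgen (s := {v, of K G g • v})
    ⟨v, Finset.mem_insert_self _ _, hv.2⟩ ?_).trans Finset.card_le_two
  have hv_mem : v ∈ Submodule.span K {v, of K G g • v} := Submodule.mem_span_of_mem (by simp)
  have hgv_mem : of K G g • v ∈ Submodule.span K {v, of K G g • v} :=
    Submodule.mem_span_of_mem (by simp)
  simp only [Finset.coe_insert, Finset.coe_singleton, Set.mem_insert_iff, Set.mem_singleton_iff,
    forall_eq_or_imp, forall_eq, Finset.mem_insert, Finset.mem_singleton]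
  refine ⟨⟨hgv_mem, ?_⟩, ⟨?_, ?_⟩, ⟨?_, ?_⟩⟩
  · rw [← mul_smul, ← map_mul, ← sq, hc]
    exact Submodule.smul_mem _ c hv_mem
  · exact hεv ▸ Submodule.smul_mem _ μ hv_mem
  · exact hεgv ▸ Submodule.smul_mem _ _ hgv_mem
  · exact (hd v).symm ▸ Submodule.smul_mem _ d hv_mem
  · exact (hd _).symm ▸ Submodule.smul_mem _ d hgv_mem

/-- Let `K` be an algebraically closed field and `G` a non-abelian epimorphic image of the
group `Γ₃`, via `γ ↦ g`, `ν ↦ ε`, `ζ ↦ z`.  Then every finite-dimensional simple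
`K G`-module has `K`-dimension at most `2`. -/
theorem dim_le_two_of_simple
    {K : Type*} [Field K] [IsAlgClosed K] {G : Type*} [Group G]
    (g ε z : G) (hε : ε ≠ 1)
    (hgen : Subgroup.closure {g, ε, z} = ⊤)
    (hrel1 : g * ε * g⁻¹ = ε ^ 2) (hrel2 : ε ^ 3 = 1)
    (hrel3 : z * g = g * z) (hrel4 : z * ε = ε * z)
    (V : Type*) [AddCommGroup V] [Module K V]
    [Module (MonoidAlgebra K G) V] [IsScalarTower K (MonoidAlgebra K G) V]
    [FiniteDimensional K V] [IsSimpleModule (MonoidAlgebra K G) V] :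
    Module.finrank K V ≤ 2 :=
  dim_le_two_of_simple_general g ε z hgen hrel1 hrel2 hrel3 hrel4 V
end

section
/- If V is a 2-dimensional simple K G-module, then the characteristic of K is not 3 and (1 + ε + ε²) acts as zero on V, i.e. x + ε·x + ε²·x = 0 for every x ∈ V. -/
/-!
Since `⟨ε⟩` is normal, the fixed space of `ε` is stable under `g` and `z`, hence is `0` or `V`
by simplicity. It is not `V`: otherwise the generators act by commuting operators, which are
scalars by Schur's lemma, and `V` would be a line. So `ε - 1` is injective, and
`(ε - 1)(1 + ε + ε²) = ε³ - 1 = 0` gives `1 + ε + ε² = 0` on `V`. In characteristic `3` this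
reads `(ε - 1)² = 0`, contradicting injectivity.
-/

open Finset
open scoped MonoidAlgebra

namespace Module.End

theorem geom_sum_eq_zero_of_pow_eq_one {R M : Type*} [Ring R] [AddCommGroup M] [Module R M]
    {f : Module.End R M} {n : ℕ} (hf : f ^ n = 1) (hfix : LinearMap.ker (f - 1) = ⊥) :
    ∑ i ∈ range n, f ^ i = 0 := by
  ext x
  apply LinearMap.ker_eq_bot.mp hfix
  rw [← mul_apply, mul_geom_sum, hf, sub_self, LinearMap.zero_apply, map_zero]

theorem ringChar_ne_three_of_pow_three_eq_one {R M : Type*} [CommRing R] [AddCommGroup M]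
    [Module R M] [Nontrivial M] {f : Module.End R M} (hf : f ^ 3 = 1)
    (hfix : LinearMap.ker (f - 1) = ⊥) : ringChar R ≠ 3 := by
  intro hchar
  have : CharP R 3 := ringChar.of_eq hchar
  have hsq : (f - 1) ^ 2 = 0 :=
    calc (f - 1) ^ 2 = ∑ i ∈ range 3, f ^ i - (3 : R) • f := by
          rw [ofNat_smul_eq_nsmul]
          simp only [sum_range_succ, sum_range_zero]
          noncomm_ring
      _ = 0 := by
          rw [geom_sum_eq_zero_of_pow_eq_one hf hfix, CharP.ofNat_eq_zero, zero_smul, sub_zero]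
  obtain ⟨x, hx⟩ := exists_ne (0 : M)
  have hinj := LinearMap.ker_eq_bot.mp hfix
  exact hx (hinj (hinj (by simpa [sq] using congr($hsq x))))

end Module.End

namespace Representation

variable {K G V : Type*} [Field K] [Group G] [AddCommGroup V] [Module K V]
  [Module K[G] V] [IsScalarTower K K[G] V]

local notation "ρ" => ofModule' (k := K) (G := G) V

theorem map_ofModule'_eq_of_mapsTo [FiniteDimensional K V] {s : Set G} {W : Submodule K V}
    (hW : ∀ h ∈ s, Set.MapsTo (ρ h) W W) {h : G} (hh : h ∈ Subgroup.closure s) :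
    W.map (ρ h) = W := by
  induction hh using Subgroup.closure_induction with
  | mem h hs =>
    have hinj : Function.Injective (ρ h) := fun x y hxy => by
      simpa [← Module.End.mul_apply, ← map_mul] using congr(ρ h⁻¹ $hxy)
    refine Submodule.eq_of_le_of_finrank_eq (Submodule.map_le_iff_le_comap.mpr (hW h hs)) ?_
    exact (Submodule.equivMapOfInjective _ hinj W).finrank_eq.symm
  | one => rw [map_one, Module.End.one_eq_id, Submodule.map_id]
  | mul a b _ _ ha hb => rw [map_mul, Module.End.mul_eq_comp, Submodule.map_comp, hb, ha]
  | inv a _ ha =>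
    conv_lhs => rw [← ha]
    rw [← Submodule.map_comp, ← Module.End.mul_eq_comp, ← map_mul, inv_mul_cancel, map_one,
      Module.End.one_eq_id, Submodule.map_id]

theorem eq_bot_or_eq_top_of_mapsTo [IsSimpleModule K[G] V] [FiniteDimensional K V] {s : Set G}
    (hs : Subgroup.closure s = ⊤) {W : Submodule K V} (hW : ∀ h ∈ s, Set.MapsTo (ρ h) W W) :
    W = ⊥ ∨ W = ⊤ := by
  have hG (h : G) {x : V} (hx : x ∈ W) : MonoidAlgebra.of K G h • x ∈ W := by
    rw [← map_ofModule'_eq_of_mapsTo hW (hs ▸ Subgroup.mem_top h)]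
    exact Submodule.mem_map_of_mem hx
  let W' : Submodule K[G] V :=
    { W with
      smul_mem' a x hx := by
        induction a using MonoidAlgebra.induction_on with
        | of h => exact hG h hx
        | add a b ha hb => rw [add_smul]; exact W.add_mem ha hb
        | smul c a ha => rw [smul_assoc]; exact W.smul_mem c ha }
  rcases eq_bot_or_eq_top W' with hbot | htop
  · exact .inl (eq_bot_iff.mpr fun x hx =>
      (Submodule.mem_bot K).mpr ((Submodule.mem_bot K[G]).mp (hbot ▸ show x ∈ W' from hx)))
  · exact .inr (eq_top_iff.mpr fun x _ => show x ∈ W' from htop ▸ Submodule.mem_top)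

theorem mapsTo_ker_ofModule'_sub_one {e h : G} {n : ℕ} (hconj : e * h = h * e ^ n) :
    Set.MapsTo (ρ h) (LinearMap.ker (ρ e - 1)) (LinearMap.ker (ρ e - 1)) := by
  intro x hx
  simp only [SetLike.mem_coe, LinearMap.mem_ker, LinearMap.sub_apply, Module.End.one_apply,
    sub_eq_zero] at hx ⊢
  rw [← Module.End.mul_apply, ← map_mul, hconj, map_mul, map_pow, Module.End.mul_apply,
    Module.End.pow_apply, Function.iterate_fixed hx]

variable [IsAlgClosed K] [IsSimpleModule K[G] V] [FiniteDimensional K V] {s : Set G}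

theorem exists_eq_smul_one_of_commute (hs : Subgroup.closure s = ⊤) {f : Module.End K V}
    (hf : ∀ h ∈ s, Commute f (ρ h)) : ∃ c : K, f = c • 1 := by
  have : Nontrivial V := IsSimpleModule.nontrivial K[G] V
  obtain ⟨c, hc⟩ := Module.End.exists_eigenvalue f
  have htop : f.eigenspace c = ⊤ := (eq_bot_or_eq_top_of_mapsTo hs fun h hh =>
    Module.End.mapsTo_genEigenspace_of_comm (hf h hh) c 1).resolve_left hc
  refine ⟨c, LinearMap.ext fun x => ?_⟩
  simpa using Module.End.mem_eigenspace_iff.mp (htop ▸ Submodule.mem_top : x ∈ f.eigenspace c)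

theorem finrank_eq_one_of_commute (hs : Subgroup.closure s = ⊤)
    (hcomm : ∀ a ∈ s, ∀ b ∈ s, Commute (ρ a) (ρ b)) : Module.finrank K V = 1 := by
  have : Nontrivial V := IsSimpleModule.nontrivial K[G] V
  obtain ⟨v, hv⟩ := exists_ne (0 : V)
  rw [finrank_eq_one_iff_of_nonzero v hv]
  refine (eq_bot_or_eq_top_of_mapsTo hs fun a ha x hx => ?_).resolve_left
    (Submodule.span_singleton_eq_bot.not.mpr hv)
  obtain ⟨c, hc⟩ := exists_eq_smul_one_of_commute hs (hcomm a ha)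
  rw [hc]
  exact Submodule.smul_mem _ c hx

end Representation

theorem char_ne_three_and_eps_sum_zero_of_simple_dim_two_general
    {K : Type*} [Field K] [IsAlgClosed K] {G : Type*} [Group G]
    (g ε z : G)
    (hgen : Subgroup.closure {g, ε, z} = ⊤)
    (hrel1 : g * ε * g⁻¹ = ε ^ 2) (hrel2 : ε ^ 3 = 1)
    (hrel3 : z * g = g * z) (hrel4 : z * ε = ε * z)
    (V : Type*) [AddCommGroup V] [Module K V]
    [Module (MonoidAlgebra K G) V] [IsScalarTower K (MonoidAlgebra K G) V]
    [IsSimpleModule (MonoidAlgebra K G) V]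
    (hdim : Module.finrank K V = 2) :
    ringChar K ≠ 3 ∧
      ∀ x : V, x + MonoidAlgebra.of K G ε • x + MonoidAlgebra.of K G (ε ^ 2) • x = 0 := by
  open Representation in
  let ρ := ofModule' (k := K) (G := G) V
  have : FiniteDimensional K V := .of_finrank_eq_succ hdim
  have : Nontrivial V := IsSimpleModule.nontrivial K[G] V
  have hεg : ε * g = g * ε ^ 2 :=
    calc ε * g = (ε ^ 2) ^ 2 * g := by rw [← pow_mul, pow_succ, hrel2, one_mul]
      _ = (g * ε * g⁻¹) ^ 2 * g := by rw [hrel1]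
      _ = g * ε ^ 2 := by rw [conj_pow, inv_mul_cancel_right]
  have hε_ne_one : ρ ε ≠ 1 := fun hε1 => by
    have hgz : Commute (ρ g) (ρ z) := (Commute.map hrel3 ρ).symm
    have : Module.finrank K V = 1 := finrank_eq_one_of_commute hgen fun a ha b hb => by
      show Commute (ρ a) (ρ b)
      rcases ha with rfl | rfl | rfl <;> rcases hb with rfl | rfl | rfl <;>
        simp only [hε1, hgz, hgz.symm, Commute.refl, Commute.one_left, Commute.one_right]
    omega
  have hfix : LinearMap.ker (ρ ε - 1) = ⊥ := by
    refine (eq_bot_or_eq_top_of_mapsTo hgen ?_).resolve_right fun htop =>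
      hε_ne_one (sub_eq_zero.mp (LinearMap.ker_eq_top.mp htop))
    rintro h (rfl | rfl | rfl)
    exacts [mapsTo_ker_ofModule'_sub_one hεg, mapsTo_ker_ofModule'_sub_one (by rw [pow_one]),
      mapsTo_ker_ofModule'_sub_one (by rw [pow_one, hrel4])]
  have hε3 : ρ ε ^ 3 = 1 := by rw [← map_pow, hrel2, map_one]
  refine ⟨Module.End.ringChar_ne_three_of_pow_three_eq_one hε3 hfix, fun x => ?_⟩
  have := congr($(Module.End.geom_sum_eq_zero_of_pow_eq_one hε3 hfix) x)
  simp only [sum_range_succ, sum_range_zero, zero_add, pow_zero, pow_one, LinearMap.add_apply,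
    Module.End.one_apply, LinearMap.zero_apply] at this
  rwa [← map_pow] at this

/-- Let `K` be an algebraically closed field and `G` a non-abelian epimorphic image of the
group `Γ₃`, via `γ ↦ g`, `ν ↦ ε`, `ζ ↦ z`.  If `V` is a 2-dimensional simple `K G`-module,
then `char K ≠ 3` and `1 + ε + ε²` acts as zero on `V`. -/
theorem char_ne_three_and_eps_sum_zero_of_simple_dim_two
    {K : Type*} [Field K] [IsAlgClosed K] {G : Type*} [Group G]
    (g ε z : G) (hε : ε ≠ 1)
    (hgen : Subgroup.closure {g, ε, z} = ⊤)
    (hrel1 : g * ε * g⁻¹ = ε ^ 2) (hrel2 : ε ^ 3 = 1)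
    (hrel3 : z * g = g * z) (hrel4 : z * ε = ε * z)
    (V : Type*) [AddCommGroup V] [Module K V]
    [Module (MonoidAlgebra K G) V] [IsScalarTower K (MonoidAlgebra K G) V]
    [IsSimpleModule (MonoidAlgebra K G) V]
    (hdim : Module.finrank K V = 2) :
    ringChar K ≠ 3 ∧
      ∀ x : V, x + MonoidAlgebra.of K G ε • x + MonoidAlgebra.of K G (ε ^ 2) • x = 0 :=
  char_ne_three_and_eps_sum_zero_of_simple_dim_two_general g ε z hgen hrel1 hrel2 hrel3 hrel4 V hdim
end

section
/- In V ⊗ W let w′ = v₂⊗w₀ − ρ_z σ_ε² v₁⊗w₁. Then w′ ≠ 0, the three vectors w′, ε·w′, ε²·w′ are linearly independent, z·w′ = ρ_z σ_z w′, and g·w′ lies in K·w′ if and only if ρ_z² σ_ε σ_{g²} = 1; in that case g·w′ = −ρ_g ρ_z⁻¹ σ_ε w′. (This is the criterion for (ad V)(W) to be absolutely simple for the first pair.) -/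
/-!
Everything in sight is a combination of two pure tensors `vᵢ ⊗ wⱼ`, so all claims reduce to
coordinates in the basis `(vᵢ ⊗ wⱼ)`. The `vᵢ ⊗ w₀`-coordinates of `w'`, `ε·w'`, `ε²·w'` sit at
three different `i`, which gives the linear independence. Writing `g·w'` against the two
coordinates of `w'` forces the scalar and turns the eigenvector condition into
`ρ_g = ρ_g ρ_z² σ_ε⁴ σ_{g²}`; since `ε³ = 1` acts on `w₀` by `σ_ε³`, we have `σ_ε³ = 1`, and
the condition becomes `ρ_z² σ_ε σ_{g²} = 1`.
-/

open TensorProduct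

namespace Representation

theorem apply_pow_of_apply_eq_smul {K G V : Type*} [CommSemiring K] [Monoid G] [AddCommMonoid V]
    [Module K V] (ρ : Representation K G V) {g : G} {x : V} {c : K}
    (h : ρ g x = c • x) (n : ℕ) : ρ (g ^ n) x = c ^ n • x := by
  induction n with
  | zero => simp
  | succ n ih =>
    rw [pow_succ, map_mul, Module.End.mul_apply, h, map_smul, ih, smul_smul, pow_succ']

variable {K G V : Type*} [CommRing K] [Monoid G] [AddCommGroup V] [Module K V]

theorem pow_eq_one_of_apply_eq_smul [IsDomain K] [Module.IsTorsionFree K V]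
    (ρ : Representation K G V) {g : G} {x : V} {c : K} {n : ℕ} (hx : x ≠ 0) (hg : g ^ n = 1)
    (h : ρ g x = c • x) : c ^ n = 1 :=
  smul_left_injective K hx <| by simpa [hg] using (ρ.apply_pow_of_apply_eq_smul h n).symm

variable {W : Type*} [AddCommGroup W] [Module K W]

theorem tprod_apply_tmul_sub_smul_tmul (ρ : Representation K G V) (σ : Representation K G W)
    (g : G) (x x' : V) (y y' : W) (c : K) :
    ρ.tprod σ g (x ⊗ₜ y - c • (x' ⊗ₜ y')) = ρ g x ⊗ₜ σ g y - c • (ρ g x' ⊗ₜ σ g y') := by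
  simp

end Representation

theorem sub_smul_mem_span_singleton_iff {K M : Type*} [CommRing K] [AddCommGroup M] [Module K M]
    {e₁ e₂ : M} (he : LinearIndependent K ![e₁, e₂]) (a p q : K) :
    p • e₂ - q • e₁ ∈ Submodule.span K {e₁ - a • e₂} ↔ p = q * a := by
  rw [Submodule.mem_span_singleton]
  constructor
  · rintro ⟨c, hc⟩
    have hcoeff := LinearIndependent.pair_iff.mp he (c + q) (-(p + c * a))
      (by linear_combination (norm := module) hc)
    linear_combination -hcoeff.2 - a * hcoeff.1
  · rintro rfl
    exact ⟨-q, by module⟩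

namespace Module.Basis

theorem linearIndependent_tmul_pair {K V W : Type*} [CommSemiring K] [AddCommMonoid V] [Module K V]
    [AddCommMonoid W] [Module K W] {ι κ : Type*} (v : Basis ι K V) (w : Basis κ K W)
    (i : ι) (j : κ) (i' : ι) (j' : κ) (h : (i, j) ≠ (i', j')) :
    LinearIndependent K ![v i ⊗ₜ[K] w j, v i' ⊗ₜ[K] w j'] := by
  have hli := (v.tensorProduct w).linearIndependent.comp _ (injective_pair_iff_ne.mpr h)
  have hfam : ⇑(v.tensorProduct w) ∘ ![(i, j), (i', j')] = ![v i ⊗ₜ[K] w j, v i' ⊗ₜ[K] w j'] := by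
    ext k; fin_cases k <;> simp
  rwa [hfam] at hli

theorem linearIndependent_tmul_cyclic {K V W : Type*} [CommRing K] [IsDomain K] [AddCommGroup V]
    [Module K V] [AddCommGroup W] [Module K W] (v : Basis (Fin 3) K V)
    (w : Basis (Fin 2) K W) {a b c d e : K} (hb : b ≠ 0) (hd : d ≠ 0) :
    LinearIndependent K ![v 2 ⊗ₜ[K] w 0 - a • (v 1 ⊗ₜ[K] w 1),
      b • (v 0 ⊗ₜ[K] w 0) - c • (v 2 ⊗ₜ[K] w 1), d • (v 1 ⊗ₜ[K] w 0) - e • (v 0 ⊗ₜ[K] w 1)] := by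
  rw [Fintype.linearIndependent_iff]
  intro f hf
  have hcoord (i : Fin 3) := congrArg (fun x ↦ (v.tensorProduct w).repr x (i, 0)) hf
  have h₀ : f 0 = 0 := by simpa [Fin.sum_univ_three, Finsupp.single_apply] using hcoord 2
  have h₁ : f 1 = 0 := by simpa [Fin.sum_univ_three, Finsupp.single_apply, hb] using hcoord 0
  have h₂ : f 2 = 0 := by simpa [Fin.sum_univ_three, Finsupp.single_apply, hd] using hcoord 1
  intro i; fin_cases i <;> assumption

end Module.Basis

theorem first_pair_adV_W_simple_criterion_general
    {K : Type*} [Field K] {G : Type*} [Group G]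
    (g ε z : G)
    (hrel2 : ε ^ 3 = 1)
    {V : Type*} [AddCommGroup V] [Module K V]
    (ρ : Representation K G V) (v : Module.Basis (Fin 3) K V)
    (ρg ρz : K) (hρg : ρg ≠ 0)
    (hεv0 : ρ ε (v 0) = v 1) (hεv1 : ρ ε (v 1) = v 2) (hεv2 : ρ ε (v 2) = v 0)
    (hzv : ∀ i, ρ z (v i) = ρz • v i)
    (hgv1 : ρ g (v 1) = ρg • v 2)
    (hgv2 : ρ g (v 2) = ρg • v 1)
    {W : Type*} [AddCommGroup W] [Module K W]
    (σ : Representation K G W) (w : Module.Basis (Fin 2) K W)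
    (σε σz σg2 : K) (hσε : σε ≠ 0)
    (hεw0 : σ ε (w 0) = σε • w 0) (hεw1 : σ ε (w 1) = σε ^ 2 • w 1)
    (hzw0 : σ z (w 0) = σz • w 0) (hzw1 : σ z (w 1) = σz • w 1)
    (hgw0 : σ g (w 0) = w 1) (hgw1 : σ g (w 1) = σg2 • w 0) :
    ∀ w' : V ⊗[K] W,
      w' = v 2 ⊗ₜ[K] w 0 - (ρz * σε ^ 2) • (v 1 ⊗ₜ[K] w 1) →
      w' ≠ 0 ∧
      LinearIndependent K ![w', (ρ.tprod σ) ε w', (ρ.tprod σ) (ε ^ 2) w'] ∧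
      (ρ.tprod σ) z w' = (ρz * σz) • w' ∧
      ((ρ.tprod σ) g w' ∈ Submodule.span K ({w'} : Set (V ⊗[K] W)) ↔
        ρz ^ 2 * σε * σg2 = 1) ∧
      (ρz ^ 2 * σε * σg2 = 1 →
        (ρ.tprod σ) g w' = (-(ρg * ρz⁻¹ * σε)) • w') := by
  intro w' hw'
  have hσε3 : σε ^ 3 = 1 := σ.pow_eq_one_of_apply_eq_smul (w.ne_zero 0) hrel2 hεw0
  have hε : ρ.tprod σ ε w' = σε • (v 0 ⊗ₜ w 0) - (ρz * σε ^ 4) • (v 2 ⊗ₜ w 1) := by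
    rw [hw', Representation.tprod_apply_tmul_sub_smul_tmul, hεv2, hεv1, hεw0, hεw1]
    simp only [tmul_smul]; module
  have hε2 : ρ.tprod σ (ε ^ 2) w' = σε ^ 2 • (v 1 ⊗ₜ w 0) - (ρz * σε ^ 6) • (v 0 ⊗ₜ w 1) := by
    rw [pow_two, map_mul, Module.End.mul_apply, hε, map_sub, map_smul, map_smul,
      Representation.tprod_apply, map_tmul, map_tmul, hεv0, hεv2, hεw0, hεw1]
    simp only [tmul_smul]; module
  have hz : ρ.tprod σ z w' = (ρz * σz) • w' := by
    rw [hw', Representation.tprod_apply_tmul_sub_smul_tmul, hzv, hzv, hzw0, hzw1]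
    simp only [tmul_smul, ← smul_tmul']; module
  have hg : ρ.tprod σ g w' = ρg • (v 1 ⊗ₜ w 1) - (ρg * ρz * σε ^ 2 * σg2) • (v 2 ⊗ₜ w 0) := by
    rw [hw', Representation.tprod_apply_tmul_sub_smul_tmul, hgv2, hgv1, hgw0, hgw1]
    simp only [tmul_smul, ← smul_tmul']; module
  have hli : LinearIndependent K ![w', ρ.tprod σ ε w', ρ.tprod σ (ε ^ 2) w'] := by
    rw [hε, hε2, hw']; exact v.linearIndependent_tmul_cyclic w hσε (pow_ne_zero 2 hσε)
  have hcrit : ρg = ρg * ρz * σε ^ 2 * σg2 * (ρz * σε ^ 2) ↔ ρz ^ 2 * σε * σg2 = 1 := by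
    rw [show ρg * ρz * σε ^ 2 * σg2 * (ρz * σε ^ 2) = ρg * (ρz ^ 2 * σε * σg2) by
      linear_combination ρg * ρz ^ 2 * σε * σg2 * hσε3, eq_comm, mul_eq_left₀ hρg]
  have hspan := sub_smul_mem_span_singleton_iff
    (v.linearIndependent_tmul_pair w 2 0 1 1 (by decide)) (ρz * σε ^ 2) ρg (ρg * ρz * σε ^ 2 * σg2)
  rw [← hw'] at hspan
  refine ⟨by simpa using hli.ne_zero 0, hli, hz, hg ▸ hspan.trans hcrit, fun h ↦ ?_⟩
  rw [hg, hw', inv_eq_of_mul_eq_one_right (a := ρz) (b := ρz * σε * σg2) (by linear_combination h)]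
  linear_combination (norm := module) (hcrit.mpr h) • (v 1 ⊗ₜ[K] w 1)

/-- Criterion for `(ad V)(W)` to be absolutely simple for the first pair over a
non-abelian epimorphic image of `Γ₃`. -/
theorem first_pair_adV_W_simple_criterion
    {K : Type*} [Field K] {G : Type*} [Group G]
    (g ε z : G) (hε : ε ≠ 1)
    (hgen : Subgroup.closure {g, ε, z} = ⊤)
    (hrel1 : g * ε * g⁻¹ = ε ^ 2) (hrel2 : ε ^ 3 = 1)
    (hrel3 : z * g = g * z) (hrel4 : z * ε = ε * z)
    {V : Type*} [AddCommGroup V] [Module K V]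
    (ρ : Representation K G V) (v : Module.Basis (Fin 3) K V)
    (ρg ρz : K) (hρg : ρg ≠ 0) (hρz : ρz ≠ 0)
    (hεv0 : ρ ε (v 0) = v 1) (hεv1 : ρ ε (v 1) = v 2) (hεv2 : ρ ε (v 2) = v 0)
    (hzv : ∀ i, ρ z (v i) = ρz • v i)
    (hgv0 : ρ g (v 0) = ρg • v 0) (hgv1 : ρ g (v 1) = ρg • v 2)
    (hgv2 : ρ g (v 2) = ρg • v 1)
    {W : Type*} [AddCommGroup W] [Module K W]
    (σ : Representation K G W) (w : Module.Basis (Fin 2) K W)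
    (σε σz σg2 : K) (hσε : σε ≠ 0) (hσz : σz ≠ 0) (hσg2 : σg2 ≠ 0)
    (hεw0 : σ ε (w 0) = σε • w 0) (hεw1 : σ ε (w 1) = σε ^ 2 • w 1)
    (hzw0 : σ z (w 0) = σz • w 0) (hzw1 : σ z (w 1) = σz • w 1)
    (hgw0 : σ g (w 0) = w 1) (hgw1 : σ g (w 1) = σg2 • w 0) :
    ∀ w' : V ⊗[K] W,
      w' = v 2 ⊗ₜ[K] w 0 - (ρz * σε ^ 2) • (v 1 ⊗ₜ[K] w 1) →
      w' ≠ 0 ∧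
      LinearIndependent K ![w', (ρ.tprod σ) ε w', (ρ.tprod σ) (ε ^ 2) w'] ∧
      (ρ.tprod σ) z w' = (ρz * σz) • w' ∧
      ((ρ.tprod σ) g w' ∈ Submodule.span K ({w'} : Set (V ⊗[K] W)) ↔
        ρz ^ 2 * σε * σg2 = 1) ∧
      (ρz ^ 2 * σε * σg2 = 1 →
        (ρ.tprod σ) g w' = (-(ρg * ρz⁻¹ * σε)) • w') :=
  first_pair_adV_W_simple_criterion_general g ε z hrel2 ρ v ρg ρz hρg hεv0 hεv1 hεv2 hzv hgv1 hgv2 σ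
    w σε σz σg2 hσε hεw0 hεw1 hzw0 hzw1 hgw0 hgw1
end

section
/- Assume ρ_z² σ_ε σ_{g²} = 1, ρ_g = −1 and 1 + σ_ε + σ_ε² = 0. In V ⊗ W set w′ = v₂⊗w₀ − ρ_z σ_ε² v₁⊗w₁, and in V ⊗ (V ⊗ W) set w″ = (1 + ρ_g² σ_ε) v₀⊗w′ + ρ_g σ_ε² (v₁⊗(ε·w′) + v₂⊗(ε²·w′)). Then w″ ≠ 0 and w″ satisfies ε·w″ = w″, g·w″ = −ρ_z⁻¹ σ_ε w″ and z·w″ = ρ_z² σ_z w″. -/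
/-!
Write `N = 1 + ε + ε²` for the norm element of `⟨ε⟩` acting on `V ⊗ (V ⊗ W)`. Since `ε·v₀ = v₁`,
`ε²·v₀ = v₂` and `1 + σ_ε = −σ_ε²`, the vector `w″` is `−σ_ε² · N(v₀ ⊗ w′)`. As `ε³ = 1`, `ε` fixes
everything in the image of `N`. As `g ε g⁻¹ = ε² = ε⁻¹`, `g` commutes with `N`, and a direct
computation using `ρ_z² σ_ε σ_{g²} = 1` gives `g·w′ = ρ_z⁻¹ σ_ε w′`; with `ρ_g = −1`, `g` therefore
scales `v₀ ⊗ w′`, hence `w″`, by `−ρ_z⁻¹ σ_ε`. The element `z` acts by scalars on both factors.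
Finally the `v₀`-component of `N(v₀ ⊗ w′)` is `w′`, whose `v₂ ⊗ w₀`-coefficient is `1`, so `w″ ≠ 0`.
-/

open TensorProduct

namespace Module.Basis

variable {R M N ι : Type*} [CommSemiring R] [AddCommMonoid M] [Module R M] [AddCommMonoid N]
  [Module R N] (v : Module.Basis ι R M)

theorem lid_rTensor_coord_tmul [DecidableEq ι] (i j : ι) (y : N) :
    TensorProduct.lid R N ((v.coord i).rTensor N (v j ⊗ₜ y)) = if j = i then y else 0 := by
  simp [Finsupp.single_apply]

theorem tmul_add_tmul_add_tmul_ne_zero {i j l : ι} (hji : j ≠ i) (hli : l ≠ i) {y : N}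
    (hy : y ≠ 0) (y' y'' : N) : v i ⊗ₜ[R] y + v j ⊗ₜ[R] y' + v l ⊗ₜ[R] y'' ≠ 0 := by
  classical
  intro h
  have := congrArg (fun x => TensorProduct.lid R N ((v.coord i).rTensor N x)) h
  simp only [map_add, map_zero, lid_rTensor_coord_tmul, if_neg hji, if_neg hli, add_zero] at this
  exact hy this

end Module.Basis

theorem Module.Basis.tmul_sub_tmul_ne_zero {R M N ι : Type*} [CommRing R] [AddCommGroup M]
    [Module R M] [AddCommGroup N] [Module R N] (v : Module.Basis ι R M) {i j : ι} (hji : j ≠ i)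
    {y : N} (hy : y ≠ 0) (y' : N) : v i ⊗ₜ[R] y - v j ⊗ₜ[R] y' ≠ 0 := by
  classical
  intro h
  have := congrArg (fun x => TensorProduct.lid R N ((v.coord i).rTensor N x)) h
  simp only [map_sub, map_zero, lid_rTensor_coord_tmul, if_neg hji, sub_zero] at this
  exact hy this

namespace Representation

section Semiring

variable {k G V W : Type*} [CommSemiring k] [AddCommMonoid V] [Module k V]
  [AddCommMonoid W] [Module k W]

section Monoid

variable [Monoid G] (ρ : Representation k G V)

theorem tprod_apply_tmul (σ : Representation k G W) (g : G) (x : V) (y : W) :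
    ρ.tprod σ g (x ⊗ₜ y) = ρ g x ⊗ₜ σ g y :=
  rfl

theorem tprod_apply_eq_smul_one {σ : Representation k G W} {g : G} {a b : k}
    (hρ : ρ g = a • 1) (hσ : σ g = b • 1) : ρ.tprod σ g = (a * b) • 1 := by
  rw [tprod_apply, hρ, hσ, TensorProduct.map_smul_left, TensorProduct.map_smul_right,
    TensorProduct.map_one, smul_smul]

def cyclicNorm (n : ℕ) (ε : G) : Module.End k V :=
  ∑ i ∈ Finset.range n, ρ (ε ^ i)

theorem mul_cyclicNorm_of_pow_eq_one {n : ℕ} {ε : G} (h : ε ^ n = 1) :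
    ρ ε * ρ.cyclicNorm n ε = ρ.cyclicNorm n ε := by
  cases n with
  | zero => simp [cyclicNorm]
  | succ n =>
    rw [cyclicNorm, Finset.mul_sum, Finset.sum_range_succ, Finset.sum_range_succ', pow_zero, ← h]
    simp only [← map_mul, ← pow_succ', h]

theorem cyclicNorm_three_tprod_tmul (σ : Representation k G W) {ε : G} {x₀ x₁ x₂ : V}
    (h₀ : ρ ε x₀ = x₁) (h₁ : ρ ε x₁ = x₂) (y : W) :
    (ρ.tprod σ).cyclicNorm 3 ε (x₀ ⊗ₜ y) = x₀ ⊗ₜ y + x₁ ⊗ₜ σ ε y + x₂ ⊗ₜ σ (ε ^ 2) y := by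
  have h₂ : ρ (ε ^ 2) x₀ = x₂ := by rw [pow_two, map_mul, Module.End.mul_apply, h₀, h₁]
  simp only [cyclicNorm, Finset.sum_range_succ, Finset.sum_range_zero, zero_add,
    LinearMap.add_apply, tprod_apply_tmul, pow_zero, pow_one, map_one, Module.End.one_apply, h₀, h₂]

end Monoid

section Group

variable [Group G] (ρ : Representation k G V)

theorem mul_cyclicNorm_of_conj_eq {g ε ε' : G} (h : g * ε * g⁻¹ = ε') (n : ℕ) :
    ρ g * ρ.cyclicNorm n ε = ρ.cyclicNorm n ε' * ρ g := by
  simp only [cyclicNorm, Finset.mul_sum, Finset.sum_mul, ← map_mul, ← h, conj_pow,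
    inv_mul_cancel_right]

theorem cyclicNorm_inv {n : ℕ} {ε : G} (h : ε ^ n = 1) :
    ρ.cyclicNorm n ε⁻¹ = ρ.cyclicNorm n ε := by
  calc ρ.cyclicNorm n ε⁻¹ = ∑ j ∈ Finset.range n, ρ (ε ^ (j + 1)) := by
        rw [cyclicNorm, ← Finset.sum_range_reflect]
        refine Finset.sum_congr rfl fun j hj => congrArg ρ ?_
        rw [inv_pow, inv_eq_iff_mul_eq_one, ← pow_add, ← h]
        have := Finset.mem_range.1 hj
        congr 1
        omega
    _ = ρ.cyclicNorm n ε := by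
        rw [← ρ.mul_cyclicNorm_of_pow_eq_one h, cyclicNorm, Finset.mul_sum]
        simp only [← map_mul, ← pow_succ']

theorem apply_cyclicNorm_eq_smul {n : ℕ} {g ε : G} (hconj : g * ε * g⁻¹ = ε⁻¹) (hε : ε ^ n = 1)
    {c : k} {x : V} (hx : ρ g x = c • x) :
    ρ g (ρ.cyclicNorm n ε x) = c • ρ.cyclicNorm n ε x := by
  rw [← Module.End.mul_apply, ρ.mul_cyclicNorm_of_conj_eq hconj, ρ.cyclicNorm_inv hε,
    Module.End.mul_apply, hx, map_smul]

end Group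

end Semiring

theorem tprod_apply_tmul_sub_smul_tmul_s4 {k G V W : Type*} [CommRing k] [Monoid G]
    [AddCommGroup V] [Module k V] [AddCommGroup W] [Module k W] (ρ : Representation k G V)
    (σ : Representation k G W) {g : G} {x₁ x₂ : V} {y₀ y₁ : W} {a b c : k}
    (hx₁ : ρ g x₁ = a • x₂) (hx₂ : ρ g x₂ = a • x₁) (hy₀ : σ g y₀ = y₁) (hy₁ : σ g y₁ = b • y₀)
    (hc : c ^ 2 * b = 1) :
    ρ.tprod σ g (x₂ ⊗ₜ y₀ - c • (x₁ ⊗ₜ y₁)) = (-(a * b * c)) • (x₂ ⊗ₜ y₀ - c • (x₁ ⊗ₜ y₁)) := by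
  simp only [map_sub, map_smul, tprod_apply_tmul, hx₁, hx₂, hy₀, hy₁, ← smul_tmul', tmul_smul,
    smul_sub, smul_smul]
  match_scalars
  · linear_combination (-a) * hc
  · ring

end Representation

theorem first_pair_adV_sq_W_general
    {K : Type*} [Field K] {G : Type*} [Group G]
    (g ε z : G)
    (hrel1 : g * ε * g⁻¹ = ε ^ 2) (hrel2 : ε ^ 3 = 1)
    {V : Type*} [AddCommGroup V] [Module K V]
    (ρ : Representation K G V) (v : Module.Basis (Fin 3) K V)
    (ρg ρz : K) (hρz : ρz ≠ 0)
    (hεv0 : ρ ε (v 0) = v 1) (hεv1 : ρ ε (v 1) = v 2)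
    (hzv : ∀ i, ρ z (v i) = ρz • v i)
    (hgv0 : ρ g (v 0) = ρg • v 0) (hgv1 : ρ g (v 1) = ρg • v 2)
    (hgv2 : ρ g (v 2) = ρg • v 1)
    {W : Type*} [AddCommGroup W] [Module K W]
    (σ : Representation K G W) (w : Module.Basis (Fin 2) K W)
    (σε σz σg2 : K) (hσε : σε ≠ 0)
    (hzw0 : σ z (w 0) = σz • w 0) (hzw1 : σ z (w 1) = σz • w 1)
    (hgw0 : σ g (w 0) = w 1) (hgw1 : σ g (w 1) = σg2 • w 0)
    (hcond1 : ρz ^ 2 * σε * σg2 = 1) (hcond2 : ρg = -1)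
    (hcond3 : 1 + σε + σε ^ 2 = 0) :
    ∀ (w' : V ⊗[K] W) (w'' : V ⊗[K] (V ⊗[K] W)),
      w' = v 2 ⊗ₜ[K] w 0 - (ρz * σε ^ 2) • (v 1 ⊗ₜ[K] w 1) →
      w'' = (1 + ρg ^ 2 * σε) • (v 0 ⊗ₜ[K] w') +
        (ρg * σε ^ 2) •
          (v 1 ⊗ₜ[K] ((ρ.tprod σ) ε w') + v 2 ⊗ₜ[K] ((ρ.tprod σ) (ε ^ 2) w')) →
      w'' ≠ 0 ∧
      (ρ.tprod (ρ.tprod σ)) ε w'' = w'' ∧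
      (ρ.tprod (ρ.tprod σ)) g w'' = (-(ρz⁻¹ * σε)) • w'' ∧
      (ρ.tprod (ρ.tprod σ)) z w'' = (ρz ^ 2 * σz) • w'' := by
  intro w' w'' hw' hw''
  subst hcond2
  set π := ρ.tprod (ρ.tprod σ)
  have hσε3 : σε ^ 3 = 1 := by linear_combination (σε - 1) * hcond3
  have hN := ρ.cyclicNorm_three_tprod_tmul (ρ.tprod σ) hεv0 hεv1 w'
  have hw''_eq : w'' = (-σε ^ 2) • π.cyclicNorm 3 ε (v 0 ⊗ₜ w') := by
    rw [hw'', hN, (by linear_combination hcond3 : 1 + (-1) ^ 2 * σε = -σε ^ 2)]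
    module
  have hgw' : ρ.tprod σ g w' = (ρz⁻¹ * σε) • w' := by
    rw [hw', ρ.tprod_apply_tmul_sub_smul_tmul_s4 σ hgv1 hgv2 hgw0 hgw1
      (by linear_combination σε ^ 3 * hcond1 + hσε3)]
    congr 1
    field_simp
    linear_combination hcond1
  have hgN : π g (v 0 ⊗ₜ w') = (-(ρz⁻¹ * σε)) • (v 0 ⊗ₜ w') := by
    rw [ρ.tprod_apply_tmul, hgv0, hgw', smul_tmul_smul, neg_one_mul]
  have hw'_ne : w' ≠ 0 := by
    rw [hw', ← tmul_smul]
    exact v.tmul_sub_tmul_ne_zero (by decide) (w.ne_zero 0) _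
  refine ⟨?_, ?_, ?_, ?_⟩
  · rw [hw''_eq, hN]
    exact smul_ne_zero (neg_ne_zero.2 (pow_ne_zero 2 hσε))
      (v.tmul_add_tmul_add_tmul_ne_zero (by decide) (by decide) hw'_ne _ _)
  · rw [hw''_eq, map_smul, ← Module.End.mul_apply, π.mul_cyclicNorm_of_pow_eq_one hrel2]
  · have hε2 : ε ^ 2 = ε⁻¹ := eq_inv_of_mul_eq_one_left (by rw [← pow_succ, hrel2])
    rw [hw''_eq, map_smul, π.apply_cyclicNorm_eq_smul (hrel1.trans hε2) hrel2 hgN, smul_comm]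
  · have hρz1 : ρ z = ρz • 1 := v.ext fun i => hzv i
    have hσz1 : σ z = σz • 1 := w.ext fun i => by fin_cases i <;> assumption
    rw [ρ.tprod_apply_eq_smul_one hρz1 (ρ.tprod_apply_eq_smul_one hρz1 hσz1),
      LinearMap.smul_apply, Module.End.one_apply, ← mul_assoc, ← pow_two]

/-- For the first pair over a non-abelian epimorphic image of `Γ₃`, with
`ρ_z² σ_ε σ_{g²} = 1`, `ρ_g = −1` and `1 + σ_ε + σ_ε² = 0`, the vector
`w″ = (1 + ρ_g² σ_ε) v₀⊗w′ + ρ_g σ_ε² (v₁⊗(ε·w′) + v₂⊗(ε²·w′))` is non-zero,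
fixed by `ε`, and `g` and `z` act on it by `−ρ_z⁻¹ σ_ε` and `ρ_z² σ_z`. -/
theorem first_pair_adV_sq_W
    {K : Type*} [Field K] {G : Type*} [Group G]
    (g ε z : G) (hε : ε ≠ 1)
    (hgen : Subgroup.closure {g, ε, z} = ⊤)
    (hrel1 : g * ε * g⁻¹ = ε ^ 2) (hrel2 : ε ^ 3 = 1)
    (hrel3 : z * g = g * z) (hrel4 : z * ε = ε * z)
    {V : Type*} [AddCommGroup V] [Module K V]
    (ρ : Representation K G V) (v : Module.Basis (Fin 3) K V)
    (ρg ρz : K) (hρg : ρg ≠ 0) (hρz : ρz ≠ 0)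
    (hεv0 : ρ ε (v 0) = v 1) (hεv1 : ρ ε (v 1) = v 2) (hεv2 : ρ ε (v 2) = v 0)
    (hzv : ∀ i, ρ z (v i) = ρz • v i)
    (hgv0 : ρ g (v 0) = ρg • v 0) (hgv1 : ρ g (v 1) = ρg • v 2)
    (hgv2 : ρ g (v 2) = ρg • v 1)
    {W : Type*} [AddCommGroup W] [Module K W]
    (σ : Representation K G W) (w : Module.Basis (Fin 2) K W)
    (σε σz σg2 : K) (hσε : σε ≠ 0) (hσz : σz ≠ 0) (hσg2 : σg2 ≠ 0)
    (hεw0 : σ ε (w 0) = σε • w 0) (hεw1 : σ ε (w 1) = σε ^ 2 • w 1)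
    (hzw0 : σ z (w 0) = σz • w 0) (hzw1 : σ z (w 1) = σz • w 1)
    (hgw0 : σ g (w 0) = w 1) (hgw1 : σ g (w 1) = σg2 • w 0)
    (hcond1 : ρz ^ 2 * σε * σg2 = 1) (hcond2 : ρg = -1)
    (hcond3 : 1 + σε + σε ^ 2 = 0) :
    ∀ (w' : V ⊗[K] W) (w'' : V ⊗[K] (V ⊗[K] W)),
      w' = v 2 ⊗ₜ[K] w 0 - (ρz * σε ^ 2) • (v 1 ⊗ₜ[K] w 1) →
      w'' = (1 + ρg ^ 2 * σε) • (v 0 ⊗ₜ[K] w') +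
        (ρg * σε ^ 2) •
          (v 1 ⊗ₜ[K] ((ρ.tprod σ) ε w') + v 2 ⊗ₜ[K] ((ρ.tprod σ) (ε ^ 2) w')) →
      w'' ≠ 0 ∧
      (ρ.tprod (ρ.tprod σ)) ε w'' = w'' ∧
      (ρ.tprod (ρ.tprod σ)) g w'' = (-(ρz⁻¹ * σε)) • w'' ∧
      (ρ.tprod (ρ.tprod σ)) z w'' = (ρz ^ 2 * σz) • w'' :=
  first_pair_adV_sq_W_general g ε z hrel1 hrel2 ρ v ρg ρz hρz hεv0 hεv1 hzv hgv0 hgv1 hgv2 σ w σε σz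
    σg2 hσε hzw0 hzw1 hgw0 hgw1 hcond1 hcond2 hcond3
end

section
/- Assume char K ≠ 3, σ_ε = 1, ρ_z² σ_{g²} = 1 and ρ_g = −1. In V ⊗ W set w′ = v₂⊗w₀ − ρ_z v₁⊗w₁, and in V ⊗ (V ⊗ W) set w″ = 2 v₀⊗w′ − v₁⊗(ε·w′) − v₂⊗(ε²·w′). Then w″ and ε·w″ are linearly independent, w″ + ε·w″ + ε²·w″ = 0, g·w″ = −ρ_z⁻¹ w″ and z·w″ = ρ_z² σ_z w″. -/
/-!
Put `u = v₀ ⊗ w′`. As `ε` acts trivially on `W`, the vector `w″` is `(2 - ε - ε²) u`.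
Because `ε³ = 1` we have `(1 + ε + ε²)(2 - ε - ε²) = (2 + ε)(1 - ε³) = 0`, which is the
orbit sum. A direct computation gives `g u = -ρ_z⁻¹ u` and `z u = ρ_z² σ_z u`; since
`g ε g⁻¹ = ε²` and `z ε = ε z`, both `g` and `z` commute with `2 - ε - ε²`, so `w″` is an
eigenvector with the same eigenvalues. Finally, two coordinates of `w″` and `ε w″` form the
matrix `[[2, -1], [-1, 2]]` of determinant `3 ≠ 0`.
-/

open TensorProduct

protected lemma Ring.three_ne_zero {R : Type*} [NonAssocSemiring R] [Nontrivial R]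
    (hR : ringChar R ≠ 3) : (3 : R) ≠ 0 := by
  rw [Ne, (by norm_cast : (3 : R) = (3 : ℕ)), ringChar.spec, Nat.dvd_prime Nat.prime_three]
  exact mt (or_iff_left hR).mp CharP.ringChar_ne_one

lemma LinearIndependent.pair_of_det_ne_zero {R M : Type*} [CommRing R] [NoZeroDivisors R]
    [AddCommGroup M] [Module R M] {x y : M} (f₁ f₂ : M →ₗ[R] R)
    (hdet : f₁ x * f₂ y - f₁ y * f₂ x ≠ 0) : LinearIndependent R ![x, y] := by
  rw [LinearIndependent.pair_iff]
  intro s t hst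
  have h₁ : s * f₁ x + t * f₁ y = 0 := by simpa using congr(f₁ $hst)
  have h₂ : s * f₂ x + t * f₂ y = 0 := by simpa using congr(f₂ $hst)
  constructor
  · exact (mul_eq_zero.mp (by linear_combination f₂ y * h₁ - f₁ y * h₂ :
      s * (f₁ x * f₂ y - f₁ y * f₂ x) = 0)).resolve_right hdet
  · exact (mul_eq_zero.mp (by linear_combination f₁ x * h₂ - f₂ x * h₁ :
      t * (f₁ x * f₂ y - f₁ y * f₂ x) = 0)).resolve_right hdet

section CubeRootOfOne

variable {R : Type*} [Ring R] {T : R}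

lemma one_add_add_sq_mul_two_sub_sub_sq (hT : T ^ 3 = 1) :
    (1 + T + T ^ 2) * (2 - T - T ^ 2) = 0 := by
  have : (1 + T + T ^ 2) * (2 - T - T ^ 2) = (2 + T) * (1 - T ^ 3) := by
    rw [← one_add_one_eq_two (R := R)]; noncomm_ring
  rw [this, hT, sub_self, mul_zero]

lemma commute_two_sub_sub_sq_of_mul_eq_sq_mul {S : R} (hT : T ^ 3 = 1)
    (hST : S * T = T ^ 2 * S) : Commute S (2 - T - T ^ 2) := by
  have hST2 : S * T ^ 2 = T * S := calc
    S * T ^ 2 = S * T * T := by rw [sq, mul_assoc]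
    _ = T ^ 2 * T ^ 2 * S := by rw [hST, mul_assoc, hST, mul_assoc]
    _ = T * S := by rw [← pow_add, show 2 + 2 = 3 + 1 from rfl, pow_succ, hT, one_mul]
  have : Commute S (T + T ^ 2) := by
    rw [Commute, SemiconjBy, mul_add, add_mul, hST, hST2, add_comm]
  rw [sub_sub]
  exact (Commute.ofNat_right S 2).sub_right this

end CubeRootOfOne

lemma Module.End.apply_eq_smul_of_commute {R M : Type*} [CommRing R] [AddCommGroup M] [Module R M]
    {f D : Module.End R M} (h : Commute f D) {c : R} {u : M} (hu : f u = c • u) :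
    f (D u) = c • D u := by
  rw [← Module.End.mul_apply, h.eq, Module.End.mul_apply, hu, map_smul]

namespace Representation

variable {k G M : Type*} [CommRing k] [Group G] [AddCommGroup M] [Module k M]
  (π : Representation k G M) {ε : G}

def twoSubSubSq (ε : G) : Module.End k M := 2 - π ε - π (ε ^ 2)

lemma twoSubSubSq_apply_add_apply_add_apply_sq_eq_zero (hε : ε ^ 3 = 1) (u : M) :
    π.twoSubSubSq ε u + π ε (π.twoSubSubSq ε u) + π (ε ^ 2) (π.twoSubSubSq ε u) = 0 := by
  have hT : π ε ^ 3 = 1 := by rw [← map_pow, hε, map_one]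
  simpa only [twoSubSubSq, map_pow, Module.End.mul_apply, LinearMap.add_apply, Module.End.one_apply,
    LinearMap.zero_apply] using congr($(one_add_add_sq_mul_two_sub_sub_sq hT) u)

lemma apply_twoSubSubSq_of_conj_eq_sq {g : G} (hε : ε ^ 3 = 1) (hgε : g * ε * g⁻¹ = ε ^ 2)
    {c : k} {u : M} (hu : π g u = c • u) :
    π g (π.twoSubSubSq ε u) = c • π.twoSubSubSq ε u := by
  have hT : π ε ^ 3 = 1 := by rw [← map_pow, hε, map_one]
  have hST : π g * π ε = π ε ^ 2 * π g := by
    rw [← map_pow, ← map_mul, ← map_mul, ← hgε, inv_mul_cancel_right]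
  rw [twoSubSubSq, map_pow]
  exact Module.End.apply_eq_smul_of_commute (commute_two_sub_sub_sq_of_mul_eq_sq_mul hT hST) hu

lemma apply_twoSubSubSq_of_commute {z : G} (hzε : z * ε = ε * z) {c : k} {u : M}
    (hu : π z u = c • u) : π z (π.twoSubSubSq ε u) = c • π.twoSubSubSq ε u := by
  have hST : Commute (π z) (π ε) := by rw [Commute, SemiconjBy, ← map_mul, ← map_mul, hzε]
  rw [twoSubSubSq, map_pow]
  exact Module.End.apply_eq_smul_of_commute
    (((Commute.ofNat_right _ 2).sub_right hST).sub_right (hST.pow_right 2)) hu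

lemma tprod_apply_tmul_s5 {N : Type*} [AddCommGroup N] [Module k N] (σ : Representation k G N)
    (g : G) (x : M) (y : N) : π.tprod σ g (x ⊗ₜ y) = π g x ⊗ₜ σ g y := rfl

end Representation

theorem first_pair_adV_sq_W_two_dim_general
    {K : Type*} [Field K] {G : Type*} [Group G]
    (g ε z : G)
    (hrel1 : g * ε * g⁻¹ = ε ^ 2) (hrel2 : ε ^ 3 = 1)
    (hrel4 : z * ε = ε * z)
    {V : Type*} [AddCommGroup V] [Module K V]
    (ρ : Representation K G V) (v : Module.Basis (Fin 3) K V)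
    (ρg ρz : K) (hρz : ρz ≠ 0)
    (hεv0 : ρ ε (v 0) = v 1) (hεv1 : ρ ε (v 1) = v 2) (hεv2 : ρ ε (v 2) = v 0)
    (hzv : ∀ i, ρ z (v i) = ρz • v i)
    (hgv0 : ρ g (v 0) = ρg • v 0) (hgv1 : ρ g (v 1) = ρg • v 2)
    (hgv2 : ρ g (v 2) = ρg • v 1)
    {W : Type*} [AddCommGroup W] [Module K W]
    (σ : Representation K G W) (w : Module.Basis (Fin 2) K W)
    (σε σz σg2 : K)
    (hεw0 : σ ε (w 0) = σε • w 0) (hεw1 : σ ε (w 1) = σε ^ 2 • w 1)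
    (hzw0 : σ z (w 0) = σz • w 0) (hzw1 : σ z (w 1) = σz • w 1)
    (hgw0 : σ g (w 0) = w 1) (hgw1 : σ g (w 1) = σg2 • w 0)
    (hchar : ringChar K ≠ 3) (hcond1 : σε = 1)
    (hcond2 : ρz ^ 2 * σg2 = 1) (hcond3 : ρg = -1) :
    ∀ (w' : V ⊗[K] W) (w'' : V ⊗[K] (V ⊗[K] W)),
      w' = v 2 ⊗ₜ[K] w 0 - ρz • (v 1 ⊗ₜ[K] w 1) →
      w'' = (2 : K) • (v 0 ⊗ₜ[K] w') - v 1 ⊗ₜ[K] ((ρ.tprod σ) ε w') -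
        v 2 ⊗ₜ[K] ((ρ.tprod σ) (ε ^ 2) w') →
      LinearIndependent K ![w'', (ρ.tprod (ρ.tprod σ)) ε w''] ∧
      w'' + (ρ.tprod (ρ.tprod σ)) ε w'' + (ρ.tprod (ρ.tprod σ)) (ε ^ 2) w'' = 0 ∧
      (ρ.tprod (ρ.tprod σ)) g w'' = (-ρz⁻¹) • w'' ∧
      (ρ.tprod (ρ.tprod σ)) z w'' = (ρz ^ 2 * σz) • w'' := by
  intro w' w'' hw' hw''
  subst hcond1 hcond3
  have hw''_eq : w'' = (ρ.tprod (ρ.tprod σ)).twoSubSubSq ε (v 0 ⊗ₜ w') := by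
    have hρε2 : ρ (ε ^ 2) (v 0) = v 2 := by rw [map_pow, sq, Module.End.mul_apply, hεv0, hεv1]
    rw [hw'', Representation.twoSubSubSq]
    simp only [LinearMap.sub_apply, Module.End.ofNat_apply, Representation.tprod_apply_tmul_s5, hεv0,
      hρε2, two_smul]
  have hgw' : (ρ.tprod σ) g w' = ρz⁻¹ • w' := by
    rw [hw']
    simp only [map_sub, map_smul, Representation.tprod_apply_tmul_s5, hgv1, hgv2, hgw0, hgw1,
      tmul_smul, ← smul_tmul']
    match_scalars
    · field_simp
    · field_simp
      linear_combination hcond2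
  have hzw' : (ρ.tprod σ) z w' = (ρz * σz) • w' := by
    rw [hw']
    simp only [map_sub, map_smul, Representation.tprod_apply_tmul_s5, hzv, hzw0, hzw1,
      tmul_smul, ← smul_tmul']
    module
  refine ⟨?_, ?_, ?_, ?_⟩
  · -- at `v₀ ⊗ v₂ ⊗ w₀` and `v₁ ⊗ v₀ ⊗ w₀` the coordinates of `w''` are `(2, -1)`, those of
    -- `ε w''` are `(-1, 2)`
    let B := v.tensorProduct (v.tensorProduct w)
    refine LinearIndependent.pair_of_det_ne_zero (B.coord (0, 2, 0)) (B.coord (1, 0, 0)) ?_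
    convert Ring.three_ne_zero hchar using 1
    rw [hw''_eq, hw']
    norm_num [B, Representation.twoSubSubSq, Representation.tprod_apply_tmul_s5, hεv0, hεv1, hεv2,
      hεw0, hεw1, Module.Basis.tensorProduct_repr_tmul_apply, Finsupp.single_apply, Fin.ext_iff,
      pow_two, Module.End.mul_apply]
  · rw [hw''_eq]
    exact Representation.twoSubSubSq_apply_add_apply_add_apply_sq_eq_zero _ hrel2 _
  · rw [hw''_eq]
    refine Representation.apply_twoSubSubSq_of_conj_eq_sq _ hrel2 hrel1 ?_
    rw [Representation.tprod_apply_tmul_s5, hgv0, hgw', smul_tmul_smul]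
    congr 1; ring
  · rw [hw''_eq]
    refine Representation.apply_twoSubSubSq_of_commute _ hrel4 ?_
    rw [Representation.tprod_apply_tmul_s5, hzv, hzw', smul_tmul_smul]
    congr 1; ring

/-- For the first pair over a non-abelian epimorphic image of `Γ₃`, with `char K ≠ 3`,
`σ_ε = 1`, `ρ_z² σ_{g²} = 1` and `ρ_g = −1`, the vector
`w″ = 2 v₀⊗w′ − v₁⊗(ε·w′) − v₂⊗(ε²·w′)` and `ε·w″` are linearly independent,
`w″ + ε·w″ + ε²·w″ = 0`, and `g`, `z` act on `w″` by `−ρ_z⁻¹` and `ρ_z² σ_z`. -/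
theorem first_pair_adV_sq_W_two_dim
    {K : Type*} [Field K] {G : Type*} [Group G]
    (g ε z : G) (hε : ε ≠ 1)
    (hgen : Subgroup.closure {g, ε, z} = ⊤)
    (hrel1 : g * ε * g⁻¹ = ε ^ 2) (hrel2 : ε ^ 3 = 1)
    (hrel3 : z * g = g * z) (hrel4 : z * ε = ε * z)
    {V : Type*} [AddCommGroup V] [Module K V]
    (ρ : Representation K G V) (v : Module.Basis (Fin 3) K V)
    (ρg ρz : K) (hρg : ρg ≠ 0) (hρz : ρz ≠ 0)
    (hεv0 : ρ ε (v 0) = v 1) (hεv1 : ρ ε (v 1) = v 2) (hεv2 : ρ ε (v 2) = v 0)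
    (hzv : ∀ i, ρ z (v i) = ρz • v i)
    (hgv0 : ρ g (v 0) = ρg • v 0) (hgv1 : ρ g (v 1) = ρg • v 2)
    (hgv2 : ρ g (v 2) = ρg • v 1)
    {W : Type*} [AddCommGroup W] [Module K W]
    (σ : Representation K G W) (w : Module.Basis (Fin 2) K W)
    (σε σz σg2 : K) (hσε : σε ≠ 0) (hσz : σz ≠ 0) (hσg2 : σg2 ≠ 0)
    (hεw0 : σ ε (w 0) = σε • w 0) (hεw1 : σ ε (w 1) = σε ^ 2 • w 1)
    (hzw0 : σ z (w 0) = σz • w 0) (hzw1 : σ z (w 1) = σz • w 1)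
    (hgw0 : σ g (w 0) = w 1) (hgw1 : σ g (w 1) = σg2 • w 0)
    (hchar : ringChar K ≠ 3) (hcond1 : σε = 1)
    (hcond2 : ρz ^ 2 * σg2 = 1) (hcond3 : ρg = -1) :
    ∀ (w' : V ⊗[K] W) (w'' : V ⊗[K] (V ⊗[K] W)),
      w' = v 2 ⊗ₜ[K] w 0 - ρz • (v 1 ⊗ₜ[K] w 1) →
      w'' = (2 : K) • (v 0 ⊗ₜ[K] w') - v 1 ⊗ₜ[K] ((ρ.tprod σ) ε w') -
        v 2 ⊗ₜ[K] ((ρ.tprod σ) (ε ^ 2) w') →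
      LinearIndependent K ![w'', (ρ.tprod (ρ.tprod σ)) ε w''] ∧
      w'' + (ρ.tprod (ρ.tprod σ)) ε w'' + (ρ.tprod (ρ.tprod σ)) (ε ^ 2) w'' = 0 ∧
      (ρ.tprod (ρ.tprod σ)) g w'' = (-ρz⁻¹) • w'' ∧
      (ρ.tprod (ρ.tprod σ)) z w'' = (ρz ^ 2 * σz) • w'' :=
  first_pair_adV_sq_W_two_dim_general g ε z hrel1 hrel2 hrel4 ρ v ρg ρz hρz hεv0 hεv1 hεv2 hzv hgv0
    hgv1 hgv2 σ w σε σz σg2 hεw0 hεw1 hzw0 hzw1 hgw0 hgw1 hchar hcond1 hcond2 hcond3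
end

section
/- Assume ρ_z² σ_ε σ_{g²} = 1, ρ_g = −1, σ_ε σ_z ≠ −1 and σ_ε σ_z² = 1. Define recursively y₀ = v₀ ∈ V and yₙ = w₀⊗(ε·yₙ₋₁) − ρ_z σ_z^{3n−1} w₁⊗(ε²·yₙ₋₁) ∈ W^{⊗n} ⊗ V for n ≥ 1. Then for every n ≥ 1 one has yₙ ≠ 0, z·yₙ = ρ_z σ_zⁿ yₙ and g·yₙ = (−1)^{n+1} ρ_z^{−n} σ_z^{n(3n+5)/2} yₙ. -/
/-! Write the recursion as `yₙ₊₁ = w₀ ⊗ ε·yₙ - c • w₁ ⊗ ε²·yₙ`. Since `z` commutes with `ε` and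
acts on `W` by the scalar `σ_z`, a `z`-eigenvector `yₙ` produces a `z`-eigenvector `yₙ₊₁`. Since
`g ε = ε² g` and `g ε² = ε g`, while `g` swaps `w₀` and `w₁` up to `σ_{g²}`, applying `g` to `yₙ₊₁`
exchanges the two summands, so if `g·yₙ = μ yₙ` the result is `-c σ_{g²} μ yₙ₊₁` exactly when
`c² σ_{g²} = 1`, which the conditions force because `σ_ε³ = 1`, hence `σ_z⁶ = 1` and
`ρ_z² σ_{g²} = σ_z²`. Non-vanishing is read off the `w₀`-component. -/

open TensorProduct

universe u₁ u₂ u₃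

/-- A bundled `K`-linear representation of `G`. -/
structure GRep (K : Type u₁) (G : Type u₂) [CommSemiring K] [Monoid G] where
  carrier : Type u₃
  [isAddCommGroup : AddCommGroup carrier]
  [isModule : Module K carrier]
  rep : Representation K G carrier

attribute [instance] GRep.isAddCommGroup GRep.isModule

/-- Tensor product of bundled representations, with the diagonal action. -/
noncomputable def GRep.tprod {K : Type u₁} {G : Type u₂} [CommSemiring K] [Monoid G]
    (A B : GRep.{u₁, u₂, u₃} K G) : GRep.{u₁, u₂, u₃} K G where
  carrier := A.carrier ⊗[K] B.carrier
  rep := A.rep.tprod B.rep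

/-- The iterated tensor product `B^{⊗n} ⊗ A` with the diagonal action. -/
noncomputable def GRep.powTensor {K : Type u₁} {G : Type u₂} [CommSemiring K] [Monoid G]
    (B A : GRep.{u₁, u₂, u₃} K G) : ℕ → GRep.{u₁, u₂, u₃} K G
  | 0 => A
  | n + 1 => B.tprod (GRep.powTensor B A n)

theorem mul_pow_sq_mul_eq_one {R : Type*} [CommRing R] {r e s t : R}
    (hret : r ^ 2 * e * t = 1) (hes : e * s ^ 2 = 1) (he : e ^ 3 = 1) (n : ℕ) :
    (r * s ^ (3 * n + 2)) ^ 2 * t = 1 := by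
  have hs : s ^ 6 = 1 := by
    calc s ^ 6 = e ^ 3 * s ^ 6 := by rw [he, one_mul]
      _ = (e * s ^ 2) ^ 3 := by ring
      _ = 1 := by rw [hes, one_pow]
  calc (r * s ^ (3 * n + 2)) ^ 2 * t
      = r ^ 2 * e * t * (s ^ 6) ^ (n + 1) + r ^ 2 * t * s ^ (6 * n + 4) * (1 - e * s ^ 2) := by
        ring
    _ = 1 := by rw [hret, hs, hes]; ring

theorem Nat.add_one_mul_three_mul_add_one_add_five_div_two (n : ℕ) :
    (n + 1) * (3 * (n + 1) + 5) / 2 = n * (3 * n + 5) / 2 + (3 * n + 4) := by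
  rw [show (n + 1) * (3 * (n + 1) + 5) = n * (3 * n + 5) + (3 * n + 4) * 2 by ring,
    Nat.add_mul_div_right _ _ two_pos]

namespace Representation

variable {K G M W : Type*} [Field K] [Group G] [AddCommGroup M] [Module K M]
  [AddCommGroup W] [Module K W]

theorem apply_apply_eq_smul_of_mul_eq (ρ : Representation K G M) {a b c : G}
    (h : a * b = c * a) {μ : K} {y : M} (hy : ρ a y = μ • y) :
    ρ a (ρ b y) = μ • ρ c y := by
  rw [← Module.End.mul_apply, ← map_mul, h, map_mul, Module.End.mul_apply, hy, map_smul]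

theorem apply_pow_eq_smul_of_apply_eq_smul (ρ : Representation K G M) {x : G} {μ : K} {y : M}
    (hy : ρ x y = μ • y) (n : ℕ) : ρ (x ^ n) y = μ ^ n • y := by
  induction n with
  | zero => simp
  | succ k ih =>
    rw [pow_succ, map_mul, Module.End.mul_apply, hy, map_smul, ih, smul_smul, pow_succ']

theorem pow_eq_one_of_apply_eq_smul_s7 (ρ : Representation K G M) {x : G} {n : ℕ}
    (hx : x ^ n = 1) {μ : K} {y : M} (hy0 : y ≠ 0) (hy : ρ x y = μ • y) : μ ^ n = 1 := by
  have h := ρ.apply_pow_eq_smul_of_apply_eq_smul hy n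
  rw [hx, map_one, Module.End.one_apply] at h
  have hfix : (μ ^ n - 1) • y = 0 := by rw [sub_smul, one_smul, ← h, sub_self]
  exact sub_eq_zero.mp ((smul_eq_zero.mp hfix).resolve_right hy0)

noncomputable def twistTmul (ρ : Representation K G M) (ε : G) (u₀ u₁ : W) (c : K) (y : M) :
    W ⊗[K] M :=
  u₀ ⊗ₜ ρ ε y - c • u₁ ⊗ₜ ρ (ε ^ 2) y

variable (ρ : Representation K G M) (σ : Representation K G W) (ε : G) {u₀ u₁ : W} (c : K)
  {y : M}

theorem twistTmul_ne_zero {ι : Type*} (w : Module.Basis ι K W) {i j : ι} (hij : i ≠ j)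
    (hy : y ≠ 0) : ρ.twistTmul ε (w i) (w j) c y ≠ 0 := by
  intro h0
  have hεy : ρ ε y = 0 := by
    simpa only [twistTmul, Function.comp_apply, map_sub, map_smul, LinearMap.rTensor_tmul,
      Module.Basis.coord_apply, Module.Basis.repr_self, Finsupp.single_eq_same,
      Finsupp.single_eq_of_ne' hij.symm, zero_tmul, smul_zero, sub_zero, lid_tmul, one_smul,
      map_zero] using
      congrArg (_root_.TensorProduct.lid K M ∘ LinearMap.rTensor M (w.coord i)) h0
  exact hy ((map_eq_zero_iff _ (ρ.apply_bijective ε).injective).mp hεy)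

theorem tprod_apply_twistTmul_of_commute {z : G} (hzε : Commute z ε) {s κ : K}
    (h₀ : σ z u₀ = s • u₀) (h₁ : σ z u₁ = s • u₁) (hy : ρ z y = κ • y) :
    σ.tprod ρ z (ρ.twistTmul ε u₀ u₁ c y) = (s * κ) • ρ.twistTmul ε u₀ u₁ c y := by
  rw [twistTmul, map_sub, map_smul, tprod_apply, map_tmul, map_tmul, h₀, h₁,
    ρ.apply_apply_eq_smul_of_mul_eq hzε.eq hy,
    ρ.apply_apply_eq_smul_of_mul_eq (hzε.pow_right 2).eq hy]
  simp only [tmul_smul, ← smul_tmul', smul_sub, smul_smul]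
  match_scalars <;> ring

theorem tprod_apply_twistTmul_of_conj {g : G} (hgε : g * ε * g⁻¹ = ε ^ 2) (hε : ε ^ 3 = 1)
    {t μ : K} (hc : c ^ 2 * t = 1) (h₀ : σ g u₀ = u₁) (h₁ : σ g u₁ = t • u₀)
    (hy : ρ g y = μ • y) :
    σ.tprod ρ g (ρ.twistTmul ε u₀ u₁ c y) = (-(c * t * μ)) • ρ.twistTmul ε u₀ u₁ c y := by
  have hg₁ : g * ε = ε ^ 2 * g := by rw [← hgε]; group
  have hg₂ : g * ε ^ 2 = ε * g := by
    have hε₄ : ε ^ 4 = ε := by rw [pow_succ, hε, one_mul]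
    rw [pow_two, ← mul_assoc, hg₁, mul_assoc, hg₁, ← mul_assoc, ← pow_add, hε₄]
  rw [twistTmul, map_sub, map_smul, tprod_apply, map_tmul, map_tmul, h₀, h₁,
    ρ.apply_apply_eq_smul_of_mul_eq hg₁ hy, ρ.apply_apply_eq_smul_of_mul_eq hg₂ hy]
  simp only [tmul_smul, ← smul_tmul', smul_sub, smul_smul]
  match_scalars
  · linear_combination (-μ) * hc
  · ring

end Representation

theorem first_pair_adW_pow_V_general
    {K : Type u₁} [Field K] {G : Type u₂} [Group G]
    (g ε z : G)
    (hrel1 : g * ε * g⁻¹ = ε ^ 2) (hrel2 : ε ^ 3 = 1)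
    (hrel4 : z * ε = ε * z)
    {V : Type u₃} [AddCommGroup V] [Module K V]
    (ρ : Representation K G V) (v : Module.Basis (Fin 3) K V)
    (ρg ρz : K) (hρz : ρz ≠ 0)
    (hzv : ∀ i, ρ z (v i) = ρz • v i)
    (hgv0 : ρ g (v 0) = ρg • v 0)
    {W : Type u₃} [AddCommGroup W] [Module K W]
    (σ : Representation K G W) (w : Module.Basis (Fin 2) K W)
    (σε σz σg2 : K)
    (hεw0 : σ ε (w 0) = σε • w 0)
    (hzw0 : σ z (w 0) = σz • w 0) (hzw1 : σ z (w 1) = σz • w 1)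
    (hgw0 : σ g (w 0) = w 1) (hgw1 : σ g (w 1) = σg2 • w 0)
    (hcond1 : ρz ^ 2 * σε * σg2 = 1) (hcond2 : ρg = -1)
    (hcond4 : σε * σz ^ 2 = 1)
    (y : (n : ℕ) → (GRep.powTensor (GRep.mk W σ) (GRep.mk V ρ) n).carrier)
    (hy0 : y 0 = v 0)
    (hyrec : ∀ n : ℕ, y (n + 1) =
      w 0 ⊗ₜ[K] ((GRep.powTensor (GRep.mk W σ) (GRep.mk V ρ) n).rep ε (y n)) -
        (ρz * σz ^ (3 * (n + 1) - 1)) •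
          (w 1 ⊗ₜ[K]
            ((GRep.powTensor (GRep.mk W σ) (GRep.mk V ρ) n).rep (ε ^ 2) (y n)))) :
    ∀ n : ℕ, 1 ≤ n →
      y n ≠ 0 ∧
      (GRep.powTensor (GRep.mk W σ) (GRep.mk V ρ) n).rep z (y n) =
        (ρz * σz ^ n) • y n ∧
      (GRep.powTensor (GRep.mk W σ) (GRep.mk V ρ) n).rep g (y n) =
        ((-1 : K) ^ (n + 1) * ρz⁻¹ ^ n * σz ^ (n * (3 * n + 5) / 2)) • y n := by
  have hc := mul_pow_sq_mul_eq_one hcond1 hcond4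
    (σ.pow_eq_one_of_apply_eq_smul_s7 hrel2 (w.ne_zero 0) hεw0)
  have hρzσg2 : ρz * σg2 = ρz⁻¹ * σz ^ 2 := by
    field_simp
    linear_combination (-(ρz ^ 2 * σg2)) * hcond4 + σz ^ 2 * hcond1
  rintro n -
  induction n with
  | zero =>
    refine ⟨hy0 ▸ v.ne_zero 0, ?_, ?_⟩
    · rw [hy0, pow_zero, mul_one]
      exact hzv 0
    · rw [hy0]
      exact hgv0.trans (congrArg (· • v 0) (by rw [hcond2]; norm_num))
  | succ n ih =>
    obtain ⟨hne, hz, hg⟩ := ih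
    have hrec : y (n + 1) = (GRep.powTensor (GRep.mk W σ) (GRep.mk V ρ) n).rep.twistTmul ε
        (w 0) (w 1) (ρz * σz ^ (3 * n + 2)) (y n) := by
      rw [hyrec, show 3 * (n + 1) - 1 = 3 * n + 2 by omega]; rfl
    rw [hrec]
    refine ⟨Representation.twistTmul_ne_zero _ _ _ w zero_ne_one hne, ?_, ?_⟩
    · refine (Representation.tprod_apply_twistTmul_of_commute _ σ ε _ hrel4 hzw0 hzw1
        hz).trans ?_
      congr 1
      ring
    · refine (Representation.tprod_apply_twistTmul_of_conj _ σ ε _ hrel1 hrel2 (hc n) hgw0 hgw1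
        hg).trans ?_
      rw [Nat.add_one_mul_three_mul_add_one_add_five_div_two]
      congr 1
      linear_combination (-(σz ^ (3 * n + 2) *
        ((-1) ^ (n + 1) * ρz⁻¹ ^ n * σz ^ (n * (3 * n + 5) / 2)))) * hρzσg2

/-- For the first pair over a non-abelian epimorphic image of `Γ₃`, with
`ρ_z² σ_ε σ_{g²} = 1`, `ρ_g = −1`, `σ_ε σ_z ≠ −1` and `σ_ε σ_z² = 1`, the recursively
defined vectors `yₙ ∈ W^{⊗n} ⊗ V` satisfy, for all `n ≥ 1`: `yₙ ≠ 0`,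
`z·yₙ = ρ_z σ_zⁿ yₙ` and `g·yₙ = (−1)^{n+1} ρ_z^{−n} σ_z^{n(3n+5)/2} yₙ`. -/
theorem first_pair_adW_pow_V
    {K : Type u₁} [Field K] {G : Type u₂} [Group G]
    (g ε z : G) (hε : ε ≠ 1)
    (hgen : Subgroup.closure {g, ε, z} = ⊤)
    (hrel1 : g * ε * g⁻¹ = ε ^ 2) (hrel2 : ε ^ 3 = 1)
    (hrel3 : z * g = g * z) (hrel4 : z * ε = ε * z)
    {V : Type u₃} [AddCommGroup V] [Module K V]
    (ρ : Representation K G V) (v : Module.Basis (Fin 3) K V)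
    (ρg ρz : K) (hρg : ρg ≠ 0) (hρz : ρz ≠ 0)
    (hεv0 : ρ ε (v 0) = v 1) (hεv1 : ρ ε (v 1) = v 2) (hεv2 : ρ ε (v 2) = v 0)
    (hzv : ∀ i, ρ z (v i) = ρz • v i)
    (hgv0 : ρ g (v 0) = ρg • v 0) (hgv1 : ρ g (v 1) = ρg • v 2)
    (hgv2 : ρ g (v 2) = ρg • v 1)
    {W : Type u₃} [AddCommGroup W] [Module K W]
    (σ : Representation K G W) (w : Module.Basis (Fin 2) K W)
    (σε σz σg2 : K) (hσε : σε ≠ 0) (hσz : σz ≠ 0) (hσg2 : σg2 ≠ 0)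
    (hεw0 : σ ε (w 0) = σε • w 0) (hεw1 : σ ε (w 1) = σε ^ 2 • w 1)
    (hzw0 : σ z (w 0) = σz • w 0) (hzw1 : σ z (w 1) = σz • w 1)
    (hgw0 : σ g (w 0) = w 1) (hgw1 : σ g (w 1) = σg2 • w 0)
    (hcond1 : ρz ^ 2 * σε * σg2 = 1) (hcond2 : ρg = -1)
    (hcond3 : σε * σz ≠ -1) (hcond4 : σε * σz ^ 2 = 1)
    (y : (n : ℕ) → (GRep.powTensor (GRep.mk W σ) (GRep.mk V ρ) n).carrier)
    (hy0 : y 0 = v 0)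
    (hyrec : ∀ n : ℕ, y (n + 1) =
      w 0 ⊗ₜ[K] ((GRep.powTensor (GRep.mk W σ) (GRep.mk V ρ) n).rep ε (y n)) -
        (ρz * σz ^ (3 * (n + 1) - 1)) •
          (w 1 ⊗ₜ[K]
            ((GRep.powTensor (GRep.mk W σ) (GRep.mk V ρ) n).rep (ε ^ 2) (y n)))) :
    ∀ n : ℕ, 1 ≤ n →
      y n ≠ 0 ∧
      (GRep.powTensor (GRep.mk W σ) (GRep.mk V ρ) n).rep z (y n) =
        (ρz * σz ^ n) • y n ∧
      (GRep.powTensor (GRep.mk W σ) (GRep.mk V ρ) n).rep g (y n) =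
        ((-1 : K) ^ (n + 1) * ρz⁻¹ ^ n * σz ^ (n * (3 * n + 5) / 2)) • y n :=
  first_pair_adW_pow_V_general g ε z hrel1 hrel2 hrel4 ρ v ρg ρz hρz hzv hgv0 σ w σε σz σg2 hεw0
    hzw0 hzw1 hgw0 hgw1 hcond1 hcond2 hcond4 y hy0 hyrec
end

section
/- Assume 1 + σ_ε + σ_ε² = 0. In V ⊗ W let w′ = v₀⊗(w₀ − ρ_z w₁). Then w′ ≠ 0, the vectors w′, ε·w′, ε²·w′ are linearly independent, z·w′ = ρ_z σ_z w′, and g·w′ lies in K·w′ if and only if ρ_z² σ_{g²} = 1; in that case g·w′ = −ρ_g ρ_z⁻¹ w′. (This is the criterion for (ad V)(W) to be simple for the second pair, where W corresponds to a two-dimensional irreducible representation of G.) -/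
/-!
Write `w' = v₀ ⊗ u` with `u = w₀ - ρ_z w₁`. Since `ε` permutes the `vᵢ` cyclically, `εⁱ·w'` is
`vᵢ ⊗ εⁱ·u` with `εⁱ·u ≠ 0`, and pure tensors against distinct basis vectors of `V` are
independent. Both `z` and `g` preserve the line `K v₀`, so `g·w' = ρ_g v₀ ⊗ g·u` and the question
is whether `g·u = w₁ - ρ_z σ_{g²} w₀` is proportional to `u`, i.e. whether the determinant
`1 - ρ_z² σ_{g²}` vanishes.
-/

open TensorProduct

section BasisTmul

variable {R ι M N : Type*} [CommRing R] [AddCommGroup M] [Module R M]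
  [AddCommGroup N] [Module R N] (v : Module.Basis ι R M)

theorem Module.Basis.lid_rTensor_coord_tmul_s8 [DecidableEq ι] (i j : ι) (y : N) :
    TensorProduct.lid R N ((v.coord i).rTensor N (v j ⊗ₜ y)) = if j = i then y else 0 := by
  by_cases h : j = i <;> simp [h]

theorem Module.Basis.tmul_injective (i : ι) :
    Function.Injective (TensorProduct.mk R M N (v i)) := by
  classical
  refine Function.LeftInverse.injective
    (g := fun x => TensorProduct.lid R N ((v.coord i).rTensor N x)) fun y => ?_
  simp

theorem Module.Basis.tmul_mem_span_singleton_tmul_iff (i : ι) (a b : N) :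
    v i ⊗ₜ[R] a ∈ Submodule.span R {v i ⊗ₜ[R] b} ↔ a ∈ Submodule.span R {b} := by
  simp only [Submodule.mem_span_singleton, ← tmul_smul]
  exact exists_congr fun c => (v.tmul_injective i).eq_iff

theorem Module.Basis.linearIndependent_tmul [IsDomain R] [Module.IsTorsionFree R N] {y : ι → N}
    (hy : ∀ i, y i ≠ 0) : LinearIndependent R fun i => v i ⊗ₜ[R] y i := by
  classical
  rw [linearIndependent_iff']
  intro s c hc i hi
  have := congrArg (fun x => TensorProduct.lid R N ((v.coord i).rTensor N x)) hc
  simp only [map_sum, map_smul, v.lid_rTensor_coord_tmul_s8, smul_ite, smul_zero,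
    Finset.sum_ite_eq', if_pos hi, map_zero] at this
  exact (smul_eq_zero.1 this).resolve_right (hy i)

end BasisTmul

section Pair

variable {K M : Type*} [Field K] [AddCommGroup M] [Module K M]

theorem sub_smul_eq_neg_inv_smul_sub {s t : K} (hst : s * t = 1) (a b : M) :
    b - t • a = (-s⁻¹) • (a - s • b) := by
  have hs : s ≠ 0 := left_ne_zero_of_mul_eq_one hst
  rw [← inv_eq_of_mul_eq_one_right hst, smul_sub, smul_smul, neg_mul, inv_mul_cancel₀ hs]
  module

theorem LinearIndependent.sub_smul_mem_span_sub_smul_iff {a b : M}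
    (hab : LinearIndependent K ![a, b]) (s t : K) :
    b - t • a ∈ Submodule.span K {a - s • b} ↔ s * t = 1 := by
  rw [Submodule.mem_span_singleton]
  constructor
  · rintro ⟨c, hc⟩
    have hcoeff := hab.eq_of_pair (s := c) (t := -(c * s)) (s' := -t) (t' := 1) <| calc
      c • a + -(c * s) • b = c • (a - s • b) := by module
      _ = b - t • a := hc
      _ = -t • a + (1 : K) • b := by module
    linear_combination s * hcoeff.1 + hcoeff.2
  · intro hst
    exact ⟨-s⁻¹, (sub_smul_eq_neg_inv_smul_sub hst a b).symm⟩

end Pair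

theorem Representation.tprod_apply_tmul_s8 {k G V W : Type*} [CommSemiring k] [Monoid G]
    [AddCommMonoid V] [Module k V] [AddCommMonoid W] [Module k W]
    (ρ : Representation k G V) (σ : Representation k G W) (g : G) (x : V) (y : W) :
    ρ.tprod σ g (x ⊗ₜ y) = ρ g x ⊗ₜ σ g y :=
  rfl

theorem Representation.linearIndependent_tprod_orbit_three {K G V W : Type*} [Field K] [Group G]
    [AddCommGroup V] [Module K V] [AddCommGroup W] [Module K W]
    (ρ : Representation K G V) (σ : Representation K G W) (v : Module.Basis (Fin 3) K V)
    {ε : G} (hεv0 : ρ ε (v 0) = v 1) (hεv1 : ρ ε (v 1) = v 2) {y : W} (hy : y ≠ 0) :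
    LinearIndependent K ![v 0 ⊗ₜ y, ρ.tprod σ ε (v 0 ⊗ₜ y), ρ.tprod σ (ε ^ 2) (v 0 ⊗ₜ y)] := by
  have horbit : ![v 0 ⊗ₜ y, ρ.tprod σ ε (v 0 ⊗ₜ y), ρ.tprod σ (ε ^ 2) (v 0 ⊗ₜ y)] =
      fun i : Fin 3 => v i ⊗ₜ σ (ε ^ (i : ℕ)) y := by
    ext i
    fin_cases i <;> simp [pow_two, hεv0, hεv1]
  exact horbit ▸ v.linearIndependent_tmul fun _ =>
    (map_ne_zero_iff _ (σ.apply_bijective _).1).2 hy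

theorem second_pair_adV_W_simple_criterion_general
    {K : Type*} [Field K] {G : Type*} [Group G]
    (g ε z : G)
    {V : Type*} [AddCommGroup V] [Module K V]
    (ρ : Representation K G V) (v : Module.Basis (Fin 3) K V)
    (ρg ρz : K) (hρg : ρg ≠ 0)
    (hεv0 : ρ ε (v 0) = v 1) (hεv1 : ρ ε (v 1) = v 2)
    (hzv : ∀ i, ρ z (v i) = ρz • v i)
    (hgv0 : ρ g (v 0) = ρg • v 0)
    {W : Type*} [AddCommGroup W] [Module K W]
    (σ : Representation K G W) (w : Module.Basis (Fin 2) K W)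
    (σz σg2 : K)
    (hzw0 : σ z (w 0) = σz • w 0) (hzw1 : σ z (w 1) = σz • w 1)
    (hgw0 : σ g (w 0) = w 1) (hgw1 : σ g (w 1) = σg2 • w 0) :
    ∀ w' : V ⊗[K] W,
      w' = v 0 ⊗ₜ[K] (w 0 - ρz • w 1) →
      w' ≠ 0 ∧
      LinearIndependent K ![w', (ρ.tprod σ) ε w', (ρ.tprod σ) (ε ^ 2) w'] ∧
      (ρ.tprod σ) z w' = (ρz * σz) • w' ∧
      ((ρ.tprod σ) g w' ∈ Submodule.span K ({w'} : Set (V ⊗[K] W)) ↔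
        ρz ^ 2 * σg2 = 1) ∧
      (ρz ^ 2 * σg2 = 1 → (ρ.tprod σ) g w' = (-(ρg * ρz⁻¹)) • w') := by
  rintro _ rfl
  have hw01 : LinearIndependent K ![w 0, w 1] := by
    convert w.linearIndependent
    ext i
    fin_cases i <;> rfl
  have hu : w 0 - ρz • w 1 ≠ 0 := fun h =>
    one_ne_zero (LinearIndependent.pair_iff.1 hw01 1 (-ρz) (by rw [← h]; module)).1
  have hindep := ρ.linearIndependent_tprod_orbit_three σ v hεv0 hεv1 hu
  have hz : ρ.tprod σ z (v 0 ⊗ₜ (w 0 - ρz • w 1)) = (ρz * σz) • v 0 ⊗ₜ (w 0 - ρz • w 1) := by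
    rw [ρ.tprod_apply_tmul_s8, hzv, map_sub, map_smul, hzw0, hzw1, smul_comm ρz σz, ← smul_sub,
      smul_tmul_smul]
  have hg : ρ.tprod σ g (v 0 ⊗ₜ (w 0 - ρz • w 1)) = ρg • v 0 ⊗ₜ (w 1 - (ρz * σg2) • w 0) := by
    rw [ρ.tprod_apply_tmul_s8, hgv0, map_sub, map_smul, hgw0, hgw1, smul_smul, smul_tmul']
  refine ⟨hindep.ne_zero 0, hindep, hz, ?_, fun h => ?_⟩
  · rw [hg, Submodule.smul_mem_iff _ hρg, v.tmul_mem_span_singleton_tmul_iff,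
      hw01.sub_smul_mem_span_sub_smul_iff, ← mul_assoc, sq]
  · rw [hg, sub_smul_eq_neg_inv_smul_sub (by linear_combination h), tmul_smul, smul_smul,
      mul_neg]

/-- Criterion for `(ad V)(W)` to be simple for the second pair over a non-abelian
epimorphic image of `Γ₃`, where `W` corresponds to a two-dimensional irreducible
representation of `G`. -/
theorem second_pair_adV_W_simple_criterion
    {K : Type*} [Field K] {G : Type*} [Group G]
    (g ε z : G) (hε : ε ≠ 1)
    (hgen : Subgroup.closure {g, ε, z} = ⊤)
    (hrel1 : g * ε * g⁻¹ = ε ^ 2) (hrel2 : ε ^ 3 = 1)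
    (hrel3 : z * g = g * z) (hrel4 : z * ε = ε * z)
    {V : Type*} [AddCommGroup V] [Module K V]
    (ρ : Representation K G V) (v : Module.Basis (Fin 3) K V)
    (ρg ρz : K) (hρg : ρg ≠ 0) (hρz : ρz ≠ 0)
    (hεv0 : ρ ε (v 0) = v 1) (hεv1 : ρ ε (v 1) = v 2) (hεv2 : ρ ε (v 2) = v 0)
    (hzv : ∀ i, ρ z (v i) = ρz • v i)
    (hgv0 : ρ g (v 0) = ρg • v 0) (hgv1 : ρ g (v 1) = ρg • v 2)
    (hgv2 : ρ g (v 2) = ρg • v 1)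
    {W : Type*} [AddCommGroup W] [Module K W]
    (σ : Representation K G W) (w : Module.Basis (Fin 2) K W)
    (σε σz σg2 : K) (hσε : σε ≠ 0) (hσz : σz ≠ 0) (hσg2 : σg2 ≠ 0)
    (hεw0 : σ ε (w 0) = σε • w 0) (hεw1 : σ ε (w 1) = σε ^ 2 • w 1)
    (hzw0 : σ z (w 0) = σz • w 0) (hzw1 : σ z (w 1) = σz • w 1)
    (hgw0 : σ g (w 0) = w 1) (hgw1 : σ g (w 1) = σg2 • w 0)
    (hcond : 1 + σε + σε ^ 2 = 0) :
    ∀ w' : V ⊗[K] W,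
      w' = v 0 ⊗ₜ[K] (w 0 - ρz • w 1) →
      w' ≠ 0 ∧
      LinearIndependent K ![w', (ρ.tprod σ) ε w', (ρ.tprod σ) (ε ^ 2) w'] ∧
      (ρ.tprod σ) z w' = (ρz * σz) • w' ∧
      ((ρ.tprod σ) g w' ∈ Submodule.span K ({w'} : Set (V ⊗[K] W)) ↔
        ρz ^ 2 * σg2 = 1) ∧
      (ρz ^ 2 * σg2 = 1 → (ρ.tprod σ) g w' = (-(ρg * ρz⁻¹)) • w') :=
  second_pair_adV_W_simple_criterion_general g ε z ρ v ρg ρz hρg hεv0 hεv1 hzv hgv0 σ w σz σg2 hzw0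
    hzw1 hgw0 hgw1
end

section
/- Assume 1 + σ_ε + σ_ε² = 0, ρ_z² σ_{g²} = 1, ρ_g = −1 and σ_z ≠ −1. In W ⊗ V set v₁′ = (w₀ − ρ_z w₁)⊗v₀, and in W ⊗ (W ⊗ V) set v₁″ = (w₀ − ρ_z σ_z w₁)⊗v₁′. Then v₁″ ≠ 0, z·v₁″ = ρ_z σ_z² v₁″, and g·v₁″ lies in K·v₁″ if and only if σ_z² = 1; moreover if σ_z = 1 then g·v₁″ = −ρ_z⁻² v₁″. -/
/-!
Put `ℓ a = w₀ - a • w₁`. As `g` swaps the lines `K w₀` and `K w₁`, it sends `ℓ a` to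
`w₁ - (a σ_{g²}) • w₀`, a multiple of `ℓ a` iff `a² σ_{g²} = 1`. So `ℓ ρ_z ⊗ v₀` is a
`g`-eigenvector, and since tensoring with a fixed nonzero vector preserves and reflects
proportionality, `v₁″ = ℓ (ρ_z σ_z) ⊗ (ℓ ρ_z ⊗ v₀)` is one iff `ρ_z² σ_z² σ_{g²} = 1`,
i.e. iff `σ_z² = 1`.
-/

open TensorProduct

section LinearIndependentPair

variable {R M : Type*} [CommRing R] [AddCommGroup M] [Module R M] {x y : M}

theorem LinearIndependent.sub_smul_ne_zero [Nontrivial R] (h : LinearIndependent R ![x, y])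
    (a : R) : x - a • y ≠ 0 := by
  intro hxy
  have := LinearIndependent.pair_iff.mp h 1 (-a)
    (by rw [one_smul, neg_smul, ← sub_eq_add_neg, hxy])
  exact one_ne_zero this.1

theorem LinearIndependent.sub_smul_mem_span_sub_smul_iff_s10 (h : LinearIndependent R ![x, y])
    (a b : R) : y - b • x ∈ R ∙ (x - a • y) ↔ a * b = 1 := by
  rw [Submodule.mem_span_singleton]
  constructor
  · rintro ⟨c, hc⟩
    obtain ⟨hcx, hcy⟩ := LinearIndependent.pair_iff.mp h (c + b) (-(c * a) - 1) (by
      rw [← sub_eq_zero.mpr hc]; module)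
    linear_combination hcy + a * hcx
  · intro hab
    refine ⟨-b, ?_⟩
    linear_combination (norm := module) hab • y

variable {f : M →ₗ[R] M} {s : R}

theorem LinearMap.apply_sub_smul_of_swap (hx : f x = y) (hy : f y = s • x) (a : R) :
    f (x - a • y) = y - (a * s) • x := by
  rw [map_sub, map_smul, hx, hy, smul_smul]

theorem LinearMap.apply_sub_smul_of_swap_of_sq_mul_eq_one (hx : f x = y) (hy : f y = s • x)
    {a : R} (ha : a ^ 2 * s = 1) : f (x - a • y) = (-(a * s)) • (x - a • y) := by
  rw [apply_sub_smul_of_swap hx hy]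
  linear_combination (norm := module) -(ha • y)

theorem LinearMap.apply_sub_smul_mem_span_iff_of_swap (h : LinearIndependent R ![x, y])
    (hx : f x = y) (hy : f y = s • x) (a : R) :
    f (x - a • y) ∈ R ∙ (x - a • y) ↔ a ^ 2 * s = 1 := by
  rw [apply_sub_smul_of_swap hx hy, h.sub_smul_mem_span_sub_smul_iff_s10, ← mul_assoc, sq]

end LinearIndependentPair

section Field

variable {K M N : Type*} [Field K] [AddCommGroup M] [Module K M] [AddCommGroup N] [Module K N]

theorem TensorProduct.exists_linearMap_tmul_right_eq {y : N} (hy : y ≠ 0) :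
    ∃ φ : M ⊗[K] N →ₗ[K] M, ∀ x, φ (x ⊗ₜ y) = x := by
  obtain ⟨f, hf⟩ := Module.Projective.exists_dual_eq_one K hy
  exact ⟨(TensorProduct.rid K M).toLinearMap ∘ₗ f.lTensor M, fun x => by simp [hf]⟩

theorem TensorProduct.tmul_ne_zero {x : M} {y : N} (hx : x ≠ 0) (hy : y ≠ 0) :
    x ⊗ₜ[K] y ≠ 0 := by
  obtain ⟨φ, hφ⟩ := exists_linearMap_tmul_right_eq (K := K) (M := M) hy
  intro h
  exact hx (by rw [← hφ x, h, map_zero])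

theorem TensorProduct.tmul_mem_span_tmul_iff {y : N} (hy : y ≠ 0) (x x' : M) :
    x ⊗ₜ[K] y ∈ K ∙ (x' ⊗ₜ[K] y) ↔ x ∈ K ∙ x' := by
  obtain ⟨φ, hφ⟩ := exists_linearMap_tmul_right_eq (K := K) (M := M) hy
  simp only [Submodule.mem_span_singleton]
  constructor
  · rintro ⟨c, hc⟩
    exact ⟨c, by simpa [hφ] using congrArg φ hc⟩
  · rintro ⟨c, rfl⟩
    exact ⟨c, (smul_tmul' c x' y).symm⟩

end Field

theorem second_pair_adW_sq_V_simple_criterion_general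
    {K : Type*} [Field K] {G : Type*} [Group G]
    (g z : G)
    {V : Type*} [AddCommGroup V] [Module K V]
    (ρ : Representation K G V) (v : Module.Basis (Fin 3) K V)
    (ρg ρz : K)
    (hzv : ∀ i, ρ z (v i) = ρz • v i)
    (hgv0 : ρ g (v 0) = ρg • v 0)
    {W : Type*} [AddCommGroup W] [Module K W]
    (σ : Representation K G W) (w : Module.Basis (Fin 2) K W)
    (σz σg2 : K)
    (hzw0 : σ z (w 0) = σz • w 0) (hzw1 : σ z (w 1) = σz • w 1)
    (hgw0 : σ g (w 0) = w 1) (hgw1 : σ g (w 1) = σg2 • w 0)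
    (hcond2 : ρz ^ 2 * σg2 = 1)
    (hcond3 : ρg = -1) :
    ∀ (v1' : W ⊗[K] V) (v1'' : W ⊗[K] (W ⊗[K] V)),
      v1' = (w 0 - ρz • w 1) ⊗ₜ[K] v 0 →
      v1'' = (w 0 - (ρz * σz) • w 1) ⊗ₜ[K] v1' →
      v1'' ≠ 0 ∧
      (σ.tprod (σ.tprod ρ)) z v1'' = (ρz * σz ^ 2) • v1'' ∧
      ((σ.tprod (σ.tprod ρ)) g v1'' ∈
          Submodule.span K ({v1''} : Set (W ⊗[K] (W ⊗[K] V))) ↔ σz ^ 2 = 1) ∧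
      (σz = 1 → (σ.tprod (σ.tprod ρ)) g v1'' = (-(ρz⁻¹ ^ 2)) • v1'') := by
  intro v1' v1'' rfl rfl
  subst hcond3
  have hw : LinearIndependent K ![w 0, w 1] := by
    convert w.linearIndependent
    ext i
    fin_cases i <;> rfl
  have hzW : σ z = σz • LinearMap.id := w.ext fun i => by fin_cases i <;> simpa
  have hzV : ρ z = ρz • LinearMap.id := v.ext hzv
  have hg_eigen : σ g (w 0 - ρz • w 1) = (-(ρz * σg2)) • (w 0 - ρz • w 1) :=
    LinearMap.apply_sub_smul_of_swap_of_sq_mul_eq_one hgw0 hgw1 hcond2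
  set Y := (w 0 - ρz • w 1) ⊗ₜ[K] v 0
  have hY : Y ≠ 0 := tmul_ne_zero (hw.sub_smul_ne_zero ρz) (v.ne_zero 0)
  have hgY : (σ.tprod ρ) g Y = (ρz * σg2) • Y := by
    rw [Representation.tprod_apply, map_tmul, hg_eigen, hgv0, smul_tmul_smul, mul_neg_one,
      neg_neg]
  have hρσ : ρz * σg2 ≠ 0 := right_ne_zero_of_mul_eq_one (a := ρz) (by linear_combination hcond2)
  refine ⟨tmul_ne_zero (hw.sub_smul_ne_zero _) hY, ?_, ?_, ?_⟩
  · simp only [Representation.tprod_apply, hzW, hzV, map_smul_left, map_smul_right, map_id,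
      LinearMap.smul_apply, LinearMap.id_apply, smul_smul]
    ring_nf
  · rw [Representation.tprod_apply, map_tmul, hgY, tmul_smul, Submodule.smul_mem_iff _ hρσ,
      tmul_mem_span_tmul_iff hY, LinearMap.apply_sub_smul_mem_span_iff_of_swap hw hgw0 hgw1]
    constructor <;> intro h
    · linear_combination h - σz ^ 2 * hcond2
    · linear_combination ρz ^ 2 * σg2 * h + hcond2
  · rintro rfl
    have hinv : ρz * σg2 = ρz⁻¹ := eq_inv_of_mul_eq_one_left (by linear_combination hcond2)
    rw [mul_one, Representation.tprod_apply, map_tmul, hg_eigen, hgY, smul_tmul_smul, hinv]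
    congr 1
    ring

/-- Criterion for `(ad W)²(V)` to be simple for the second pair over a non-abelian
epimorphic image of `Γ₃`. -/
theorem second_pair_adW_sq_V_simple_criterion
    {K : Type*} [Field K] {G : Type*} [Group G]
    (g ε z : G) (hε : ε ≠ 1)
    (hgen : Subgroup.closure {g, ε, z} = ⊤)
    (hrel1 : g * ε * g⁻¹ = ε ^ 2) (hrel2 : ε ^ 3 = 1)
    (hrel3 : z * g = g * z) (hrel4 : z * ε = ε * z)
    {V : Type*} [AddCommGroup V] [Module K V]
    (ρ : Representation K G V) (v : Module.Basis (Fin 3) K V)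
    (ρg ρz : K) (hρg : ρg ≠ 0) (hρz : ρz ≠ 0)
    (hεv0 : ρ ε (v 0) = v 1) (hεv1 : ρ ε (v 1) = v 2) (hεv2 : ρ ε (v 2) = v 0)
    (hzv : ∀ i, ρ z (v i) = ρz • v i)
    (hgv0 : ρ g (v 0) = ρg • v 0) (hgv1 : ρ g (v 1) = ρg • v 2)
    (hgv2 : ρ g (v 2) = ρg • v 1)
    {W : Type*} [AddCommGroup W] [Module K W]
    (σ : Representation K G W) (w : Module.Basis (Fin 2) K W)
    (σε σz σg2 : K) (hσε : σε ≠ 0) (hσz : σz ≠ 0) (hσg2 : σg2 ≠ 0)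
    (hεw0 : σ ε (w 0) = σε • w 0) (hεw1 : σ ε (w 1) = σε ^ 2 • w 1)
    (hzw0 : σ z (w 0) = σz • w 0) (hzw1 : σ z (w 1) = σz • w 1)
    (hgw0 : σ g (w 0) = w 1) (hgw1 : σ g (w 1) = σg2 • w 0)
    (hcond1 : 1 + σε + σε ^ 2 = 0) (hcond2 : ρz ^ 2 * σg2 = 1)
    (hcond3 : ρg = -1) (hcond4 : σz ≠ -1) :
    ∀ (v1' : W ⊗[K] V) (v1'' : W ⊗[K] (W ⊗[K] V)),
      v1' = (w 0 - ρz • w 1) ⊗ₜ[K] v 0 →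
      v1'' = (w 0 - (ρz * σz) • w 1) ⊗ₜ[K] v1' →
      v1'' ≠ 0 ∧
      (σ.tprod (σ.tprod ρ)) z v1'' = (ρz * σz ^ 2) • v1'' ∧
      ((σ.tprod (σ.tprod ρ)) g v1'' ∈
          Submodule.span K ({v1''} : Set (W ⊗[K] (W ⊗[K] V))) ↔ σz ^ 2 = 1) ∧
      (σz = 1 → (σ.tprod (σ.tprod ρ)) g v1'' = (-(ρz⁻¹ ^ 2)) • v1'') :=
  second_pair_adW_sq_V_simple_criterion_general g z ρ v ρg ρz hzv hgv0 σ w σz σg2 hzw0 hzw1 hgw0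
    hgw1 hcond2 hcond3
end

section
/- Assume 1 + σ_ε + σ_ε² = 0, ρ_z² σ_{g²} = 1, ρ_g = −1 and σ_z = 1. For n ≥ 1 set yₙ = (w₀ − ρ_z w₁)^{⊗n} ⊗ v₀ ∈ W^{⊗n} ⊗ V. Then for every n ≥ 1 one has yₙ ≠ 0, g·yₙ = (−1)^{n+1} ρ_z^{−n} yₙ and z·yₙ = ρ_z yₙ. -/
/-! `u = w₀ - ρ_z • w₁` is an eigenvector of `g` with eigenvalue `-ρ_z⁻¹` (because
`ρ_z σ_{g²} = ρ_z⁻¹`) and of `z` with eigenvalue `σ_z = 1`, while `v₀` is an eigenvector of `g`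
and `z` with eigenvalues `ρ_g = -1` and `ρ_z`. Under the diagonal action eigenvalues multiply
along `yₙ₊₁ = u ⊗ yₙ`, and over a field a pure tensor of nonzero vectors is nonzero. -/

open TensorProduct

universe u₁ u₂ u₃

theorem TensorProduct.tmul_ne_zero_s11 {K M N : Type*} [Field K] [AddCommGroup M] [Module K M]
    [AddCommGroup N] [Module K N] {m : M} {n : N} (hm : m ≠ 0) (hn : n ≠ 0) :
    m ⊗ₜ[K] n ≠ 0 := by
  obtain ⟨f, hf⟩ := Module.Projective.exists_dual_eq_one K hm
  obtain ⟨f', hf'⟩ := Module.Projective.exists_dual_eq_one K hn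
  intro h
  simpa [hf, hf'] using congrArg (LinearMap.mul' K K ∘ₗ TensorProduct.map f f') h

namespace GRep

theorem powTensor_rep_eq_smul {K G : Type*} [CommSemiring K] [Monoid G] {B A : GRep K G}
    {u : B.carrier} {y : (n : ℕ) → (powTensor B A n).carrier} {g : G} {c d : K}
    (hu : B.rep g u = c • u) (hy0 : A.rep g (y 0) = d • y 0)
    (hyrec : ∀ n, y (n + 1) = u ⊗ₜ y n) (n : ℕ) :
    (powTensor B A n).rep g (y n) = (c ^ n * d) • y n := by
  induction n with
  | zero => rw [pow_zero, one_mul]; exact hy0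
  | succ n ih =>
    rw [hyrec]
    change B.rep g u ⊗ₜ (powTensor B A n).rep g (y n) = _
    rw [hu, ih, smul_tmul_smul, pow_succ', mul_assoc]
    rfl

theorem powTensor_ne_zero {K G : Type*} [Field K] [Monoid G] {B A : GRep K G} {u : B.carrier}
    {y : (n : ℕ) → (powTensor B A n).carrier} (hu : u ≠ 0) (hy0 : y 0 ≠ 0)
    (hyrec : ∀ n, y (n + 1) = u ⊗ₜ y n) (n : ℕ) : y n ≠ 0 := by
  induction n with
  | zero => exact hy0
  | succ n ih => rw [hyrec]; exact TensorProduct.tmul_ne_zero_s11 hu ih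

end GRep

theorem second_pair_adW_pow_V_general
    {K : Type u₁} [Field K] {G : Type u₂} [Group G]
    (g z : G)
    {V : Type u₃} [AddCommGroup V] [Module K V]
    (ρ : Representation K G V) (v : Module.Basis (Fin 3) K V)
    (ρg ρz : K)
    (hzv : ∀ i, ρ z (v i) = ρz • v i)
    (hgv0 : ρ g (v 0) = ρg • v 0)
    {W : Type u₃} [AddCommGroup W] [Module K W]
    (σ : Representation K G W) (w : Module.Basis (Fin 2) K W)
    (σz σg2 : K)
    (hzw0 : σ z (w 0) = σz • w 0) (hzw1 : σ z (w 1) = σz • w 1)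
    (hgw0 : σ g (w 0) = w 1) (hgw1 : σ g (w 1) = σg2 • w 0)
    (hcond2 : ρz ^ 2 * σg2 = 1)
    (hcond3 : ρg = -1) (hcond4 : σz = 1)
    (y : (n : ℕ) → (GRep.powTensor (GRep.mk W σ) (GRep.mk V ρ) n).carrier)
    (hy0 : y 0 = v 0)
    (hyrec : ∀ n : ℕ, y (n + 1) = (w 0 - ρz • w 1) ⊗ₜ[K] y n) :
    ∀ n : ℕ, 1 ≤ n →
      y n ≠ 0 ∧
      (GRep.powTensor (GRep.mk W σ) (GRep.mk V ρ) n).rep g (y n) =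
        ((-1 : K) ^ (n + 1) * ρz⁻¹ ^ n) • y n ∧
      (GRep.powTensor (GRep.mk W σ) (GRep.mk V ρ) n).rep z (y n) = ρz • y n := by
  intro n _
  have hρz : ρz ≠ 0 := by rintro rfl; simp at hcond2
  have hσg2 : ρz * σg2 = ρz⁻¹ :=
    eq_inv_of_mul_eq_one_left (b := ρz) (by linear_combination hcond2)
  have hu : w 0 - ρz • w 1 ≠ 0 := fun h => by
    simpa [Module.Basis.repr_self] using congrArg (w.coord 0) h
  have hgu : σ g (w 0 - ρz • w 1) = (-ρz⁻¹) • (w 0 - ρz • w 1) := by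
    rw [map_sub, map_smul, hgw0, hgw1, smul_smul, hσg2, smul_sub, smul_smul, neg_mul,
      inv_mul_cancel₀ hρz]
    module
  have hzu : σ z (w 0 - ρz • w 1) = (1 : K) • (w 0 - ρz • w 1) := by
    rw [map_sub, map_smul, hzw0, hzw1, hcond4, one_smul, one_smul, one_smul]
  have hgv : ρ g (v 0) = (-1 : K) • v 0 := hcond3 ▸ hgv0
  refine ⟨GRep.powTensor_ne_zero hu (hy0 ▸ v.ne_zero 0) hyrec n, ?_, ?_⟩
  · rw [GRep.powTensor_rep_eq_smul hgu (hy0 ▸ hgv) hyrec]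
    congr 1
    ring
  · rw [GRep.powTensor_rep_eq_smul hzu (hy0 ▸ hzv 0) hyrec, one_pow, one_mul]

/-- For the second pair over a non-abelian epimorphic image of `Γ₃`, with
`1 + σ_ε + σ_ε² = 0`, `ρ_z² σ_{g²} = 1`, `ρ_g = −1` and `σ_z = 1`, the vectors
`yₙ = (w₀ − ρ_z w₁)^{⊗n} ⊗ v₀ ∈ W^{⊗n} ⊗ V` satisfy, for all `n ≥ 1`: `yₙ ≠ 0`,
`g·yₙ = (−1)^{n+1} ρ_z^{−n} yₙ` and `z·yₙ = ρ_z yₙ`. -/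
theorem second_pair_adW_pow_V
    {K : Type u₁} [Field K] {G : Type u₂} [Group G]
    (g ε z : G) (hε : ε ≠ 1)
    (hgen : Subgroup.closure {g, ε, z} = ⊤)
    (hrel1 : g * ε * g⁻¹ = ε ^ 2) (hrel2 : ε ^ 3 = 1)
    (hrel3 : z * g = g * z) (hrel4 : z * ε = ε * z)
    {V : Type u₃} [AddCommGroup V] [Module K V]
    (ρ : Representation K G V) (v : Module.Basis (Fin 3) K V)
    (ρg ρz : K) (hρg : ρg ≠ 0) (hρz : ρz ≠ 0)
    (hεv0 : ρ ε (v 0) = v 1) (hεv1 : ρ ε (v 1) = v 2) (hεv2 : ρ ε (v 2) = v 0)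
    (hzv : ∀ i, ρ z (v i) = ρz • v i)
    (hgv0 : ρ g (v 0) = ρg • v 0) (hgv1 : ρ g (v 1) = ρg • v 2)
    (hgv2 : ρ g (v 2) = ρg • v 1)
    {W : Type u₃} [AddCommGroup W] [Module K W]
    (σ : Representation K G W) (w : Module.Basis (Fin 2) K W)
    (σε σz σg2 : K) (hσε : σε ≠ 0) (hσz : σz ≠ 0) (hσg2 : σg2 ≠ 0)
    (hεw0 : σ ε (w 0) = σε • w 0) (hεw1 : σ ε (w 1) = σε ^ 2 • w 1)
    (hzw0 : σ z (w 0) = σz • w 0) (hzw1 : σ z (w 1) = σz • w 1)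
    (hgw0 : σ g (w 0) = w 1) (hgw1 : σ g (w 1) = σg2 • w 0)
    (hcond1 : 1 + σε + σε ^ 2 = 0) (hcond2 : ρz ^ 2 * σg2 = 1)
    (hcond3 : ρg = -1) (hcond4 : σz = 1)
    (y : (n : ℕ) → (GRep.powTensor (GRep.mk W σ) (GRep.mk V ρ) n).carrier)
    (hy0 : y 0 = v 0)
    (hyrec : ∀ n : ℕ, y (n + 1) = (w 0 - ρz • w 1) ⊗ₜ[K] y n) :
    ∀ n : ℕ, 1 ≤ n →
      y n ≠ 0 ∧
      (GRep.powTensor (GRep.mk W σ) (GRep.mk V ρ) n).rep g (y n) =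
        ((-1 : K) ^ (n + 1) * ρz⁻¹ ^ n) • y n ∧
      (GRep.powTensor (GRep.mk W σ) (GRep.mk V ρ) n).rep z (y n) = ρz • y n :=
  second_pair_adW_pow_V_general g z ρ v ρg ρz hzv hgv0 σ w σz σg2 hzw0 hzw1 hgw0 hgw1 hcond2 hcond3
    hcond4 y hy0 hyrec
end

section
/- Assume ρ_z σ_g ≠ 1, and in V ⊗ V ⊗ W set w″ = v₂⊗v₀⊗w − ρ_g² ρ_z σ_g v₀⊗v₁⊗w + ρ_g(1 − ρ_z σ_g) v₁⊗v₂⊗w. Then w″ ≠ 0, z·w″ = ρ_z² σ_z w″, g²·w″ = ρ_g⁴ σ_g² w″, and: (a) if ρ_g = −1, then ε·w″ lies in K·w″ if and only if 1 − ρ_z σ_g + (ρ_z σ_g)² = 0, in which case ε·w″ = (ρ_z σ_g − 1) w″; (b) if ρ_g ρ_z σ_g = 1 and 1 − ρ_g + ρ_g² = 0, then ε·w″ = ρ_g(1 − ρ_z σ_g) w″. (This is the criterion for (ad V)²(W) to be absolutely simple for the third pair.) -/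
/-!
Put `s = ρ_z σ_g`. The vectors `e_i = v_{i-1} ⊗ v_i ⊗ w` (`i ∈ ℤ/3`) are linearly
independent, `ε` permutes them cyclically, and `w″ = e₀ - ρ_g² s e₁ + ρ_g (1 - s) e₂`.
Hence `ε·w″ = t w″` amounts to three scalar equations saying that the coefficient vector
of `w″` is an eigenvector of the cyclic shift; these reduce to `1 - s + s² = 0` when
`ρ_g = -1`, and to `1 - ρ_g + ρ_g² = 0` when `ρ_g s = 1`. On the other hand `z` and `g²`
act on `V` and on `w` by scalars.
-/

open TensorProduct Module

namespace Representation

variable {k G V W : Type*} [CommRing k] [Monoid G] [AddCommGroup V] [Module k V]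
  [AddCommGroup W] [Module k W]

theorem apply_sq_eq_smul_of_swap (ρ : Representation k G V) {x : G} {a b : V} {c : k}
    (ha : ρ x a = c • b) (hb : ρ x b = c • a) : ρ (x ^ 2) a = c ^ 2 • a := by
  rw [map_pow, sq, End.mul_apply, ha, map_smul, hb, smul_smul, sq]

theorem tmul_mem_eigenspace (ρ : Representation k G V) (σ : Representation k G W) {x : G}
    {a : V} {b : W} {c d : k} (ha : a ∈ End.eigenspace (ρ x) c)
    (hb : b ∈ End.eigenspace (σ x) d) : a ⊗ₜ b ∈ End.eigenspace (ρ.tprod σ x) (c * d) := by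
  rw [End.mem_eigenspace_iff] at ha hb ⊢
  rw [tprod_apply, map_tmul, ha, hb, smul_tmul_smul]

end Representation

section CyclicShift

variable {R M : Type*} [Semiring R] [AddCommMonoid M] [Module R M]

theorem LinearIndependent.sum_smul_ne_zero {ι : Type*} [Fintype ι] {e : ι → M}
    (he : LinearIndependent R e) {a : ι → R} {i : ι} (hi : a i ≠ 0) : ∑ j, a j • e j ≠ 0 := by
  intro h
  exact hi (Fintype.linearIndependent_iffₛ.mp he a 0 (by simpa using h) i)

theorem LinearIndependent.sum_smul_eq_smul_sum_iff {ι : Type*} [Fintype ι] {e : ι → M}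
    (he : LinearIndependent R e) (a b : ι → R) (t : R) :
    ∑ i, b i • e i = t • ∑ i, a i • e i ↔ ∀ i, b i = t * a i := by
  simp_rw [Finset.smul_sum, smul_smul]
  exact ⟨Fintype.linearIndependent_iffₛ.mp he _ _, fun h => by simp_rw [h]⟩

variable {n : ℕ} [NeZero n] {e : Fin n → M} {T : M →ₗ[R] M}

theorem apply_sum_smul_of_cyclic (hT : ∀ i, T (e i) = e (i + 1)) (a : Fin n → R) :
    T (∑ i, a i • e i) = ∑ i, a (i - 1) • e i := by
  simp only [map_sum, map_smul, hT]
  exact Fintype.sum_equiv (Equiv.addRight 1) _ _ (by simp)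

theorem apply_sum_smul_eq_smul_iff_of_cyclic (he : LinearIndependent R e)
    (hT : ∀ i, T (e i) = e (i + 1)) (a : Fin n → R) (t : R) :
    T (∑ i, a i • e i) = t • ∑ i, a i • e i ↔ ∀ i, a (i - 1) = t * a i := by
  rw [apply_sum_smul_of_cyclic hT, he.sum_smul_eq_smul_sum_iff]

theorem apply_sum_smul_mem_span_iff_of_cyclic (he : LinearIndependent R e)
    (hT : ∀ i, T (e i) = e (i + 1)) (a : Fin n → R) :
    T (∑ i, a i • e i) ∈ Submodule.span R {∑ i, a i • e i} ↔
      ∃ t, ∀ i, a (i - 1) = t * a i := by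
  simp_rw [Submodule.mem_span_singleton, eq_comm (b := T _),
    apply_sum_smul_eq_smul_iff_of_cyclic he hT]

end CyclicShift

theorem Fin.forall_three_sub_one_eq_mul_iff {R : Type*} [Mul R] (a : Fin 3 → R) (t : R) :
    (∀ i : Fin 3, a (i - 1) = t * a i) ↔ a 2 = t * a 0 ∧ a 0 = t * a 1 ∧ a 1 = t * a 2 := by
  simp [Fin.forall_fin_succ, show (-1 : Fin 3) = 2 from rfl]

section ThirdPair

variable {K V W : Type*} [Field K] [AddCommGroup V] [Module K V] [AddCommGroup W] [Module K W]

/-- Coefficients of `w″` against `thirdPairVec`, with `s = ρ_z σ_g`. -/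
def thirdPairCoeff (r s : K) : Fin 3 → K :=
  ![1, -(r ^ 2 * s), r * (1 - s)]

def thirdPairVec (v : Fin 3 → V) (w : W) (i : Fin 3) : V ⊗[K] (V ⊗[K] W) :=
  v (i - 1) ⊗ₜ (v i ⊗ₜ w)

theorem thirdPairCoeff_cyclic_of_neg_one {s : K} (hs : 1 - s + s ^ 2 = 0) (i : Fin 3) :
    thirdPairCoeff (-1) s (i - 1) = (s - 1) * thirdPairCoeff (-1) s i := by
  revert i
  rw [Fin.forall_three_sub_one_eq_mul_iff]
  simp only [thirdPairCoeff, Matrix.cons_val]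
  exact ⟨by ring, by linear_combination hs, by linear_combination -hs⟩

theorem exists_thirdPairCoeff_cyclic_neg_one_iff (s : K) :
    (∃ t, ∀ i, thirdPairCoeff (-1) s (i - 1) = t * thirdPairCoeff (-1) s i) ↔
      1 - s + s ^ 2 = 0 := by
  refine ⟨fun ⟨t, ht⟩ => ?_, fun hs => ⟨_, thirdPairCoeff_cyclic_of_neg_one hs⟩⟩
  rw [Fin.forall_three_sub_one_eq_mul_iff] at ht
  simp only [thirdPairCoeff, Matrix.cons_val] at ht
  obtain ⟨h2, h0, -⟩ := ht
  linear_combination h0 + s * h2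

theorem thirdPairCoeff_cyclic {r s : K} (hrs : r * s = 1) (hr : 1 - r + r ^ 2 = 0) (i : Fin 3) :
    thirdPairCoeff r s (i - 1) = (r * (1 - s)) * thirdPairCoeff r s i := by
  revert i
  rw [Fin.forall_three_sub_one_eq_mul_iff]
  simp only [thirdPairCoeff, Matrix.cons_val]
  refine ⟨by ring, ?_, ?_⟩
  · linear_combination (r ^ 2 - r * (r * s + 1)) * hrs + hr
  · linear_combination (r - 1 - r * s) * hrs - hr

theorem linearIndependent_thirdPairVec {v : Fin 3 → V} (hv : LinearIndependent K v) {w : W}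
    (hw : w ≠ 0) : LinearIndependent K (thirdPairVec (K := K) v w) := by
  have hw' : LinearIndependent K fun _ : Unit => w := linearIndependent_unique_iff.mpr hw
  refine (hv.tmul_of_isDomain (hv.tmul_of_isDomain hw')).comp (fun i => (i - 1, i, ())) ?_
  intro i j h
  simpa using congrArg (fun p => p.2.1) h

variable {G : Type*} [Monoid G] (ρ : Representation K G V) (σ : Representation K G W)
  {v : Fin 3 → V} {w : W} {x : G}

theorem thirdPairVec_mem_eigenspace {c d : K} (hv : ∀ i, ρ x (v i) = c • v i)
    (hw : σ x w = d • w) (i : Fin 3) :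
    thirdPairVec v w i ∈ End.eigenspace (ρ.tprod (ρ.tprod σ) x) (c * (c * d)) := by
  have hv' : ∀ j, v j ∈ End.eigenspace (ρ x) c := fun j => End.mem_eigenspace_iff.mpr (hv j)
  exact ρ.tmul_mem_eigenspace _ (hv' _)
    (ρ.tmul_mem_eigenspace σ (hv' i) (End.mem_eigenspace_iff.mpr hw))

theorem tprod_thirdPairVec_of_cyclic (hv : ∀ i, ρ x (v i) = v (i + 1)) (hw : σ x w = w)
    (i : Fin 3) : ρ.tprod (ρ.tprod σ) x (thirdPairVec v w i) = thirdPairVec v w (i + 1) := by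
  simp only [thirdPairVec, Representation.tprod_apply, map_tmul, hv, hw, sub_add_cancel,
    add_sub_cancel_right]

end ThirdPair

theorem third_pair_adV_sq_W_simple_criterion_general
    {K : Type*} [Field K] {G : Type*} [Group G]
    (g ε z : G)
    {V : Type*} [AddCommGroup V] [Module K V]
    (ρ : Representation K G V) (v : Module.Basis (Fin 3) K V)
    (ρg ρz : K)
    (hεv0 : ρ ε (v 0) = v 1) (hεv1 : ρ ε (v 1) = v 2) (hεv2 : ρ ε (v 2) = v 0)
    (hzv : ∀ i, ρ z (v i) = ρz • v i)
    (hgv0 : ρ g (v 0) = ρg • v 0) (hgv1 : ρ g (v 1) = ρg • v 2)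
    (hgv2 : ρ g (v 2) = ρg • v 1)
    {W : Type*} [AddCommGroup W] [Module K W]
    (σ : Representation K G W) (w : W) (hw : w ≠ 0)
    (σg σz : K)
    (hgw : σ g w = σg • w) (hεw : σ ε w = w) (hzw : σ z w = σz • w) :
    ∀ w'' : V ⊗[K] (V ⊗[K] W),
      w'' = v 2 ⊗ₜ[K] (v 0 ⊗ₜ[K] w) -
          (ρg ^ 2 * ρz * σg) • (v 0 ⊗ₜ[K] (v 1 ⊗ₜ[K] w)) +
          (ρg * (1 - ρz * σg)) • (v 1 ⊗ₜ[K] (v 2 ⊗ₜ[K] w)) →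
      w'' ≠ 0 ∧
      (ρ.tprod (ρ.tprod σ)) z w'' = (ρz ^ 2 * σz) • w'' ∧
      (ρ.tprod (ρ.tprod σ)) (g ^ 2) w'' = (ρg ^ 4 * σg ^ 2) • w'' ∧
      (ρg = -1 →
        ((ρ.tprod (ρ.tprod σ)) ε w'' ∈
            Submodule.span K ({w''} : Set (V ⊗[K] (V ⊗[K] W))) ↔
          1 - ρz * σg + (ρz * σg) ^ 2 = 0) ∧
        (1 - ρz * σg + (ρz * σg) ^ 2 = 0 →
          (ρ.tprod (ρ.tprod σ)) ε w'' = (ρz * σg - 1) • w'')) ∧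
      (ρg * ρz * σg = 1 → 1 - ρg + ρg ^ 2 = 0 →
        (ρ.tprod (ρ.tprod σ)) ε w'' = (ρg * (1 - ρz * σg)) • w'') := by
  intro w'' hw''
  have hsum : w'' = ∑ i, thirdPairCoeff ρg (ρz * σg) i • thirdPairVec v w i := by
    simp only [hw'', Fin.sum_univ_three, thirdPairCoeff, thirdPairVec, Matrix.cons_val,
      Fin.reduceSub]
    module
  have hεv : ∀ i, ρ ε (v i) = v (i + 1) := by
    intro i; fin_cases i
    exacts [hεv0, hεv1, hεv2]
  have hg2v : ∀ i, ρ (g ^ 2) (v i) = ρg ^ 2 • v i := by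
    intro i; fin_cases i
    exacts [ρ.apply_sq_eq_smul_of_swap hgv0 hgv0, ρ.apply_sq_eq_smul_of_swap hgv1 hgv2,
      ρ.apply_sq_eq_smul_of_swap hgv2 hgv1]
  have hli := linearIndependent_thirdPairVec v.linearIndependent hw
  have hε := tprod_thirdPairVec_of_cyclic ρ σ hεv hεw
  have mem_eigenspace {x : G} {c d : K} (hvx : ∀ i, ρ x (v i) = c • v i)
      (hwx : σ x w = d • w) : w'' ∈ End.eigenspace (ρ.tprod (ρ.tprod σ) x) (c * (c * d)) :=
    hsum ▸ Submodule.sum_mem _ fun i _ =>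
      Submodule.smul_mem _ _ (thirdPairVec_mem_eigenspace ρ σ hvx hwx i)
  refine ⟨hsum ▸ hli.sum_smul_ne_zero (i := 0) one_ne_zero, ?_, ?_, fun hneg => ?_,
    fun hrs hr => ?_⟩
  · simpa [End.mem_eigenspace_iff, sq, mul_assoc] using mem_eigenspace hzv hzw
  · simpa [End.mem_eigenspace_iff, pow_succ, mul_assoc] using
      mem_eigenspace hg2v (σ.apply_sq_eq_smul_of_swap hgw hgw)
  · subst hneg hsum
    rw [apply_sum_smul_mem_span_iff_of_cyclic hli hε, exists_thirdPairCoeff_cyclic_neg_one_iff,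
      apply_sum_smul_eq_smul_iff_of_cyclic hli hε]
    exact ⟨Iff.rfl, thirdPairCoeff_cyclic_of_neg_one⟩
  · rw [hsum, apply_sum_smul_eq_smul_iff_of_cyclic hli hε]
    exact thirdPairCoeff_cyclic (by rwa [← mul_assoc]) hr

/-- Criterion for `(ad V)²(W)` to be absolutely simple for the third pair over a
non-abelian epimorphic image of `Γ₃`. -/
theorem third_pair_adV_sq_W_simple_criterion
    {K : Type*} [Field K] {G : Type*} [Group G]
    (g ε z : G) (hε : ε ≠ 1)
    (hgen : Subgroup.closure {g, ε, z} = ⊤)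
    (hrel1 : g * ε * g⁻¹ = ε ^ 2) (hrel2 : ε ^ 3 = 1)
    (hrel3 : z * g = g * z) (hrel4 : z * ε = ε * z)
    {V : Type*} [AddCommGroup V] [Module K V]
    (ρ : Representation K G V) (v : Module.Basis (Fin 3) K V)
    (ρg ρz : K) (hρg : ρg ≠ 0) (hρz : ρz ≠ 0)
    (hεv0 : ρ ε (v 0) = v 1) (hεv1 : ρ ε (v 1) = v 2) (hεv2 : ρ ε (v 2) = v 0)
    (hzv : ∀ i, ρ z (v i) = ρz • v i)
    (hgv0 : ρ g (v 0) = ρg • v 0) (hgv1 : ρ g (v 1) = ρg • v 2)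
    (hgv2 : ρ g (v 2) = ρg • v 1)
    {W : Type*} [AddCommGroup W] [Module K W]
    (σ : Representation K G W) (w : W) (hw : w ≠ 0)
    (hspan : Submodule.span K ({w} : Set W) = ⊤)
    (σg σz : K) (hσg : σg ≠ 0) (hσz : σz ≠ 0)
    (hgw : σ g w = σg • w) (hεw : σ ε w = w) (hzw : σ z w = σz • w)
    (hcond : ρz * σg ≠ 1) :
    ∀ w'' : V ⊗[K] (V ⊗[K] W),
      w'' = v 2 ⊗ₜ[K] (v 0 ⊗ₜ[K] w) -
          (ρg ^ 2 * ρz * σg) • (v 0 ⊗ₜ[K] (v 1 ⊗ₜ[K] w)) +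
          (ρg * (1 - ρz * σg)) • (v 1 ⊗ₜ[K] (v 2 ⊗ₜ[K] w)) →
      w'' ≠ 0 ∧
      (ρ.tprod (ρ.tprod σ)) z w'' = (ρz ^ 2 * σz) • w'' ∧
      (ρ.tprod (ρ.tprod σ)) (g ^ 2) w'' = (ρg ^ 4 * σg ^ 2) • w'' ∧
      (ρg = -1 →
        ((ρ.tprod (ρ.tprod σ)) ε w'' ∈
            Submodule.span K ({w''} : Set (V ⊗[K] (V ⊗[K] W))) ↔
          1 - ρz * σg + (ρz * σg) ^ 2 = 0) ∧
        (1 - ρz * σg + (ρz * σg) ^ 2 = 0 →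
          (ρ.tprod (ρ.tprod σ)) ε w'' = (ρz * σg - 1) • w'')) ∧
      (ρg * ρz * σg = 1 → 1 - ρg + ρg ^ 2 = 0 →
        (ρ.tprod (ρ.tprod σ)) ε w'' = (ρg * (1 - ρz * σg)) • w'') :=
  third_pair_adV_sq_W_simple_criterion_general g ε z ρ v ρg ρz hεv0 hεv1 hεv2 hzv hgv0 hgv1 hgv2 σ w
    hw σg σz hgw hεw hzw
end
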